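/- arXiv:2004.02013 — 6 statements merged into one kernel-verified Lean document; each statement's English description precedes it below -/
import Mathlib

section
/- A nonempty topological space X is Baire if and only if player I has no winning strategy in the Banach–Mazur game BM(X). -/
/-- Player I's moves in the Banach–Mazur game, as determined by a strategy `σ`
(a function of the list of player II's previous moves) against II's moves `V`. -/
def bmMoves {X : Type*} (σ : List (Set X) → Set X) (V : ℕ → Set X) (n : ℕ) :
    Set X :=
  σ (List.ofFn fun i : Fin n => V i)

/-- Legality of a reply `V` to the previous move `U`: `V` is nonempty open and
`V ⊆ U`. -/
def bmLegal {X : Type*} [TopologicalSpace X] (U V : Set X) : Prop :=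
  IsOpen V ∧ V.Nonempty ∧ V ⊆ U

/-- `σ` is a winning strategy for player I in the Banach–Mazur game `BM(X)`:
it answers every admissible position with a legal move (a nonempty open set
contained in II's last move), and whenever II plays legally throughout,
`⋂ₙ Uₙ = ∅`. -/
def BMWinningI (X : Type*) [TopologicalSpace X] (σ : List (Set X) → Set X) :
    Prop :=
  ∀ V : ℕ → Set X,
    (∀ n, (∀ m < n, bmLegal (bmMoves σ V m) (V m)) →
      bmLegal (if n = 0 then Set.univ else V (n - 1)) (bmMoves σ V n)) ∧
    ((∀ n, bmLegal (bmMoves σ V n) (V n)) → (⋂ n, bmMoves σ V n) = ∅)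

/-!
Oxtoby's argument. If `X` is not Baire, some nonempty open `U` misses the intersection of dense
open sets `f n`, and player I wins by intersecting II's `n`-th move (or `U` at the start) with
`f n`. Conversely, let `σ` be a winning strategy for I in a Baire space. By Zorn's lemma every
legal position has a maximal family of legal replies of II whose answers by `σ` are pairwise
disjoint. Iterating from the empty position gives levels of positions whose answers are pairwise
disjoint and, by maximality, have dense union in `σ []`. A point lying in all these unions
(Baire category theorem) picks out one position per level, and by disjointness these positions
extend each other: they form a legal play whose moves all contain the point, so `σ` loses it.
-/

open Set

lemma List.ofFn_succ_eq_append {α : Type*} (V : ℕ → α) (n : ℕ) :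
    (List.ofFn fun i : Fin (n + 1) => V i) = (List.ofFn fun i : Fin n => V i) ++ [V n] := by
  rw [List.ofFn_succ', List.concat_eq_append]
  rfl

lemma List.ofFn_getD_eq_take {α : Type*} (L : List α) (d : α) {m : ℕ} (hm : m ≤ L.length) :
    (List.ofFn fun i : Fin m => L.getD i d) = L.take m := by
  refine List.ext_getElem (by simpa using hm) fun i h _ => ?_
  rw [List.getElem_ofFn, List.getElem_take, List.getD_eq_getElem]

lemma List.exists_ofFn_eq {α : Type*} {L : ℕ → List α} (h0 : L 0 = [])
    (hsucc : ∀ n, ∃ a, L (n + 1) = L n ++ [a]) :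
    ∃ V : ℕ → α, ∀ n, (List.ofFn fun i : Fin n => V i) = L n := by
  choose V hV using hsucc
  refine ⟨V, fun n => ?_⟩
  induction n with
  | zero => simp [h0]
  | succ n ih => rw [List.ofFn_succ_eq_append, ih, hV]

lemma dense_union_compl_closure {X : Type*} [TopologicalSpace X] {s t : Set X}
    (h : s ⊆ closure t) : Dense (t ∪ (closure s)ᶜ) := by
  refine dense_iff_closure_eq.2 (eq_univ_of_univ_subset ?_)
  calc univ = closure s ∪ (closure s)ᶜ := (union_compl_self _).symm
    _ ⊆ closure t ∪ closure (closure s)ᶜ :=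
      union_subset_union (closure_minimal h isClosed_closure) subset_closure
    _ = closure (t ∪ (closure s)ᶜ) := closure_union.symm

lemma exists_isOpen_inter_iInter_eq_empty_of_not_baireSpace {X : Type*} [TopologicalSpace X]
    (h : ¬ BaireSpace X) :
    ∃ U : Set X, IsOpen U ∧ U.Nonempty ∧ ∃ f : ℕ → Set X,
      (∀ n, IsOpen (f n)) ∧ (∀ n, Dense (f n)) ∧ U ∩ ⋂ n, f n = ∅ := by
  contrapose! h
  exact ⟨fun f hfo hfd => dense_iff_inter_open.2 fun U hU hne =>
    h U hU hne f hfo hfd⟩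

section BanachMazur

variable {X : Type*} [TopologicalSpace X]

def IsBMPosition (σ : List (Set X) → Set X) (L : List (Set X)) : Prop :=
  ∀ i (h : i < L.length), bmLegal (σ (L.take i)) L[i]

lemma isBMPosition_nil (σ : List (Set X) → Set X) : IsBMPosition σ [] :=
  fun i h => absurd h (Nat.not_lt_zero i)

lemma IsBMPosition.append_singleton {σ : List (Set X) → Set X} {L : List (Set X)}
    {V : Set X} (hL : IsBMPosition σ L) (hV : bmLegal (σ L) V) :
    IsBMPosition σ (L ++ [V]) := by
  intro i h
  rcases Nat.lt_or_ge i L.length with hi | hi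
  · rw [List.take_append_of_le_length hi.le, List.getElem_append_left hi]
    exact hL i hi
  · obtain rfl : i = L.length := le_antisymm (by simpa [Nat.lt_succ_iff] using h) hi
    rwa [List.take_left, List.getElem_concat_length rfl]

lemma BMWinningI.bmLegal_getLastD {σ : List (Set X) → Set X} (hσ : BMWinningI X σ)
    {L : List (Set X)} (hL : IsBMPosition σ L) : bmLegal (L.getLastD univ) (σ L) := by
  have hmoves : ∀ m ≤ L.length, bmMoves σ (fun i => L.getD i ∅) m = σ (L.take m) :=
    fun m hm => by rw [bmMoves, List.ofFn_getD_eq_take L ∅ hm]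
  have h := (hσ fun i => L.getD i ∅).1 L.length fun m hm => by
    rw [hmoves m hm.le, List.getD_eq_getElem _ _ hm]
    exact hL m hm
  rw [hmoves _ le_rfl, List.take_length] at h
  rcases L.eq_nil_or_concat with rfl | ⟨L', a, rfl⟩ <;> simpa using h

lemma BMWinningI.subset_of_bmLegal {σ : List (Set X) → Set X} (hσ : BMWinningI X σ)
    {L : List (Set X)} {V : Set X} (hL : IsBMPosition σ L) (hV : bmLegal (σ L) V) :
    σ (L ++ [V]) ⊆ V := by
  simpa using (hσ.bmLegal_getLastD (hL.append_singleton hV)).2.2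

lemma bmWinningI_getLastD_inter {U : Set X} (hU : IsOpen U) (hne : U.Nonempty) {f : ℕ → Set X}
    (hfo : ∀ n, IsOpen (f n)) (hfd : ∀ n, Dense (f n)) (hempty : U ∩ ⋂ n, f n = ∅) :
    BMWinningI X fun L => L.getLastD U ∩ f L.length := by
  intro V
  have hmoves_zero : bmMoves (fun L => L.getLastD U ∩ f L.length) V 0 = U ∩ f 0 := rfl
  have hmoves_succ : ∀ n, bmMoves (fun L => L.getLastD U ∩ f L.length) V (n + 1) =
      V n ∩ f (n + 1) := fun n => by
    simp only [bmMoves, List.ofFn_succ_eq_append, List.getLastD_concat, List.length_append,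
      List.length_ofFn, List.length_singleton]
  refine ⟨fun n hprev => ?_, fun _ => eq_empty_of_subset_empty (hempty ▸ fun x hx => ?_)⟩
  · cases n with
    | zero =>
      rw [hmoves_zero]
      exact ⟨hU.inter (hfo 0), (hfd 0).inter_open_nonempty U hU hne, subset_univ _⟩
    | succ n =>
      obtain ⟨hVo, hVne, -⟩ := hprev n n.lt_succ_self
      rw [hmoves_succ, if_neg n.succ_ne_zero, Nat.add_sub_cancel]
      exact ⟨hVo.inter (hfo _), (hfd _).inter_open_nonempty _ hVo hVne, inter_subset_left⟩
  · have hx := mem_iInter.1 hx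
    exact ⟨(hx 0).1, mem_iInter.2 fun n => by simpa [bmMoves] using (hx n).2⟩

def IsBMDisjointReplies (σ : List (Set X) → Set X) (L : List (Set X)) (S : Set (Set X)) : Prop :=
  (∀ V ∈ S, bmLegal (σ L) V) ∧ S.PairwiseDisjoint fun V => σ (L ++ [V])

lemma exists_maximal_isBMDisjointReplies (σ : List (Set X) → Set X) (L : List (Set X)) :
    ∃ S, Maximal (IsBMDisjointReplies σ L) S := by
  obtain ⟨S, hS⟩ := zorn_subset {S | IsBMDisjointReplies σ L S} fun c hc hchain =>
    ⟨⋃₀ c, ⟨fun _ ⟨_, hs, hV⟩ => (hc hs).1 _ hV,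
      (pairwiseDisjoint_sUnion hchain.directedOn).2 fun _ hs => (hc hs).2⟩,
      fun _ => subset_sUnion_of_mem⟩
  exact ⟨S, hS⟩

noncomputable def bmMaxReplies (σ : List (Set X) → Set X) (L : List (Set X)) : Set (Set X) :=
  (exists_maximal_isBMDisjointReplies σ L).choose

lemma maximal_bmMaxReplies (σ : List (Set X) → Set X) (L : List (Set X)) :
    Maximal (IsBMDisjointReplies σ L) (bmMaxReplies σ L) :=
  (exists_maximal_isBMDisjointReplies σ L).choose_spec

def bmLevel (σ : List (Set X) → Set X) : ℕ → Set (List (Set X))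
  | 0 => {[]}
  | n + 1 => ⋃ L ∈ bmLevel σ n, (fun V => L ++ [V]) '' bmMaxReplies σ L

section Levels

variable {σ : List (Set X) → Set X} {n : ℕ}

lemma mem_bmLevel_succ {L' : List (Set X)} :
    L' ∈ bmLevel σ (n + 1) ↔ ∃ L ∈ bmLevel σ n, ∃ V ∈ bmMaxReplies σ L, L ++ [V] = L' := by
  simp [bmLevel]

lemma append_mem_bmLevel_succ {L : List (Set X)} {V : Set X} :
    L ++ [V] ∈ bmLevel σ (n + 1) ↔ L ∈ bmLevel σ n ∧ V ∈ bmMaxReplies σ L := by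
  refine mem_bmLevel_succ.trans ⟨fun ⟨M, hM, W, hW, h⟩ => ?_, fun h => ⟨L, h.1, V, h.2, rfl⟩⟩
  obtain ⟨rfl, hWV⟩ := List.append_inj' h rfl
  exact ⟨hM, List.singleton_inj.1 hWV ▸ hW⟩

lemma isBMPosition_of_mem_bmLevel {L : List (Set X)} (hL : L ∈ bmLevel σ n) :
    IsBMPosition σ L := by
  induction n generalizing L with
  | zero => exact (mem_singleton_iff.1 hL) ▸ isBMPosition_nil σ
  | succ n ih =>
    obtain ⟨M, hM, V, hV, rfl⟩ := mem_bmLevel_succ.1 hL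
    exact (ih hM).append_singleton ((maximal_bmMaxReplies σ M).prop.1 V hV)

lemma BMWinningI.subset_of_mem_bmMaxReplies (hσ : BMWinningI X σ) {L : List (Set X)} {V : Set X}
    (hL : IsBMPosition σ L) (hV : V ∈ bmMaxReplies σ L) : σ (L ++ [V]) ⊆ σ L :=
  have hV' := (maximal_bmMaxReplies σ L).prop.1 V hV
  (hσ.subset_of_bmLegal hL hV').trans hV'.2.2

lemma BMWinningI.pairwiseDisjoint_bmLevel (hσ : BMWinningI X σ) (n : ℕ) :
    (bmLevel σ n).PairwiseDisjoint σ := by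
  induction n with
  | zero => exact pairwiseDisjoint_singleton _ _
  | succ n ih =>
    rintro _ hP _ hP' hne
    obtain ⟨L, hL, V, hV, rfl⟩ := mem_bmLevel_succ.1 hP
    obtain ⟨L', hL', V', hV', rfl⟩ := mem_bmLevel_succ.1 hP'
    by_cases hLL : L = L'
    · subst hLL
      exact (maximal_bmMaxReplies σ L).prop.2 hV hV' fun h => hne (h ▸ rfl)
    · exact (ih hL hL' hLL).mono
        (hσ.subset_of_mem_bmMaxReplies (isBMPosition_of_mem_bmLevel hL) hV)
        (hσ.subset_of_mem_bmMaxReplies (isBMPosition_of_mem_bmLevel hL') hV')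

lemma BMWinningI.subset_closure_biUnion_bmMaxReplies (hσ : BMWinningI X σ) {L : List (Set X)}
    (hL : IsBMPosition σ L) : σ L ⊆ closure (⋃ V ∈ bmMaxReplies σ L, σ (L ++ [V])) := by
  intro x hx
  refine mem_closure_iff.2 fun O hO hxO => ?_
  have hW : bmLegal (σ L) (O ∩ σ L) :=
    ⟨hO.inter (hσ.bmLegal_getLastD hL).1, ⟨x, hxO, hx⟩, inter_subset_right⟩
  suffices ∃ V ∈ bmMaxReplies σ L, ¬ Disjoint (σ (L ++ [O ∩ σ L])) (σ (L ++ [V])) by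
    obtain ⟨V, hV, y, hyW, hyV⟩ := this.imp fun _ => And.imp_right not_disjoint_iff.1
    exact ⟨y, (hσ.subset_of_bmLegal hL hW hyW).1, mem_biUnion hV hyV⟩
  -- Otherwise `O ∩ σ L` could be added to the maximal family, and then `σ`'s answer to it,
  -- being disjoint from itself, would be empty.
  by_contra! hdisj
  have hmem : O ∩ σ L ∈ bmMaxReplies σ L :=
    (maximal_bmMaxReplies σ L).mem_of_prop_insert ⟨forall_mem_insert.2
      ⟨hW, (maximal_bmMaxReplies σ L).prop.1⟩,
      (maximal_bmMaxReplies σ L).prop.2.insert fun V hV _ => hdisj V hV⟩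
  exact (hσ.bmLegal_getLastD (hL.append_singleton hW)).2.1.ne_empty
    (disjoint_self.1 (hdisj _ hmem))

lemma BMWinningI.subset_closure_biUnion_bmLevel (hσ : BMWinningI X σ) (n : ℕ) :
    σ [] ⊆ closure (⋃ L ∈ bmLevel σ n, σ L) := by
  induction n with
  | zero => simpa [bmLevel] using subset_closure
  | succ n ih =>
    refine ih.trans (closure_minimal (iUnion₂_subset fun L hL => ?_) isClosed_closure)
    refine (hσ.subset_closure_biUnion_bmMaxReplies (isBMPosition_of_mem_bmLevel hL)).trans
      (closure_mono (iUnion₂_subset fun V hV => ?_))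
    exact subset_biUnion_of_mem (u := σ) (append_mem_bmLevel_succ.2 ⟨hL, hV⟩)

lemma BMWinningI.exists_forall_mem_biUnion_bmLevel [BaireSpace X] (hσ : BMWinningI X σ) :
    ∃ x, ∀ n, x ∈ ⋃ L ∈ bmLevel σ n, σ L := by
  -- The levels are only dense in `σ []`; adding the exterior of `σ []` makes them dense in `X`.
  have hGo : ∀ n, IsOpen ((⋃ L ∈ bmLevel σ n, σ L) ∪ (closure (σ []))ᶜ) := fun n =>
    (isOpen_biUnion fun _ hL => (hσ.bmLegal_getLastD (isBMPosition_of_mem_bmLevel hL)).1).union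
      isClosed_closure.isOpen_compl
  have hGd : ∀ n, Dense ((⋃ L ∈ bmLevel σ n, σ L) ∪ (closure (σ []))ᶜ) := fun n =>
    dense_union_compl_closure (hσ.subset_closure_biUnion_bmLevel n)
  obtain ⟨hU₀, hU₀ne, -⟩ := hσ.bmLegal_getLastD (isBMPosition_nil σ)
  obtain ⟨x, hx₀, hx⟩ := (dense_iInter_of_isOpen hGo hGd).inter_open_nonempty _ hU₀ hU₀ne
  exact ⟨x, fun n => (mem_iInter.1 hx n).resolve_right (not_not.2 (subset_closure hx₀))⟩

lemma BMWinningI.exists_play_mem_bmLevel (hσ : BMWinningI X σ) {x : X}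
    (hx : ∀ n, x ∈ ⋃ L ∈ bmLevel σ n, σ L) :
    ∃ V : ℕ → Set X, ∀ n, (List.ofFn fun i : Fin n => V i) ∈ bmLevel σ n ∧ x ∈ bmMoves σ V n := by
  simp only [mem_iUnion₂] at hx
  choose Lx hLx hxL using hx
  have hparent : ∀ n, ∃ V, Lx (n + 1) = Lx n ++ [V] := fun n => by
    obtain ⟨M, hM, V, hV, hMV⟩ := mem_bmLevel_succ.1 (hLx (n + 1))
    have hxM : x ∈ σ M :=
      hσ.subset_of_mem_bmMaxReplies (isBMPosition_of_mem_bmLevel hM) hV (hMV ▸ hxL (n + 1))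
    obtain rfl : M = Lx n := (hσ.pairwiseDisjoint_bmLevel n).elim hM (hLx n)
      (not_disjoint_iff.2 ⟨x, hxM, hxL n⟩)
    exact ⟨V, hMV.symm⟩
  obtain ⟨V, hV⟩ := List.exists_ofFn_eq (hLx 0) hparent
  exact ⟨V, fun n => ⟨hV n ▸ hLx n, by rw [bmMoves, hV n]; exact hxL n⟩⟩

end Levels

lemma not_bmWinningI [BaireSpace X] (σ : List (Set X) → Set X) : ¬ BMWinningI X σ := by
  intro hσ
  obtain ⟨x, hx⟩ := hσ.exists_forall_mem_biUnion_bmLevel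
  obtain ⟨V, hV⟩ := hσ.exists_play_mem_bmLevel hx
  have hlegal : ∀ n, bmLegal (bmMoves σ V n) (V n) := fun n =>
    (maximal_bmMaxReplies σ _).prop.1 _
      (append_mem_bmLevel_succ.1 (List.ofFn_succ_eq_append V n ▸ (hV (n + 1)).1)).2
  have hx_mem : x ∈ ⋂ n, bmMoves σ V n := mem_iInter.2 fun n => (hV n).2
  rw [(hσ V).2 hlegal] at hx_mem
  exact hx_mem

end BanachMazur

theorem baire_iff_no_winning_strategy_BM_general {X : Type*} [TopologicalSpace X] :
    BaireSpace X ↔ ¬ ∃ σ : List (Set X) → Set X, BMWinningI X σ := by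
  refine ⟨fun _ ⟨σ, hσ⟩ => not_bmWinningI σ hσ, fun h => by_contra fun hB => ?_⟩
  obtain ⟨U, hU, hne, f, hfo, hfd, hempty⟩ :=
    exists_isOpen_inter_iInter_eq_empty_of_not_baireSpace hB
  exact h ⟨_, bmWinningI_getLastD_inter hU hne hfo hfd hempty⟩

/-- Oxtoby's theorem: a nonempty space is Baire iff player I has no winning
strategy in the Banach–Mazur game. -/
theorem baire_iff_no_winning_strategy_BM {X : Type*} [TopologicalSpace X]
    [Nonempty X] :
    BaireSpace X ↔ ¬ ∃ σ : List (Set X) → Set X, BMWinningI X σ :=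
  baire_iff_no_winning_strategy_BM_general
end

section
/- A topological space X is Menger if and only if player I does not have a winning strategy in the Menger game M(X). -/
/-- A space is Menger if for every sequence of open covers there are finite
subfamilies whose union is a cover. -/
def Menger (X : Type*) [TopologicalSpace X] : Prop :=
  ∀ U : ℕ → Set (Set X),
    (∀ n, (∀ u ∈ U n, IsOpen u) ∧ ⋃₀ (U n) = Set.univ) →
    ∃ V : ℕ → Set (Set X),
      (∀ n, V n ⊆ U n ∧ (V n).Finite) ∧ ⋃₀ (⋃ n, V n) = Set.univ

/-- Player I's moves (open covers) in the Menger game, as determined by a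
strategy `σ` against player II's moves `V` (finite subfamilies). -/
def mMoves {X : Type*} (σ : List (Set (Set X)) → Set (Set X))
    (V : ℕ → Set (Set X)) (n : ℕ) : Set (Set X) :=
  σ (List.ofFn fun i : Fin n => V i)

/-- `σ` is a winning strategy for player I in the Menger game `M(X)`: it always
plays open covers of `X`, and whenever II responds with finite subfamilies
throughout, their union fails to cover `X`. -/
def MengerWinningI (X : Type*) [TopologicalSpace X]
    (σ : List (Set (Set X)) → Set (Set X)) : Prop :=
  ∀ V : ℕ → Set (Set X),
    (∀ n, (∀ m < n, V m ⊆ mMoves σ V m ∧ (V m).Finite) →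
      ((∀ u ∈ mMoves σ V n, IsOpen u) ∧ ⋃₀ (mMoves σ V n) = Set.univ)) ∧
    ((∀ n, V n ⊆ mMoves σ V n ∧ (V n).Finite) → ⋃₀ (⋃ n, V n) ≠ Set.univ)


/-! Player II's moves are finite, so against a strategy of I one may first make every cover
countable (Menger spaces are Lindelöf) and enumerate it; II's answer at a node is then a number
`m`, meaning "the first `m` sets". The possible plays form a finitely branching tree once a bound
`κ` on the answers at every node is fixed, so for each height `n` and bound `κ` the points covered
at every node of the `κ`-tree up to height `n` form an open set, and these sets cover `X`. The
Menger property applied to these covers yields finitely many bounds at each height; answering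
their maximum at every stage produces a play of II that covers `X`. -/

open Set

namespace Menger

variable {X : Type*} [TopologicalSpace X]

theorem exists_finite_subfamilies {ι : Type*} (hM : Menger X) (U : ℕ → ι → Set X)
    (hUo : ∀ n i, IsOpen (U n i)) (hU : ∀ n, ⋃ i, U n i = univ) :
    ∃ F : ℕ → Set ι, (∀ n, (F n).Finite) ∧ ⋃ n, ⋃ i ∈ F n, U n i = univ := by
  obtain ⟨V, hV, hVcov⟩ :=
    hM (fun n ↦ range (U n)) fun n ↦ ⟨forall_mem_range.2 (hUo n), sUnion_range _ ▸ hU n⟩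
  have hpre : ∀ n, ∃ F ⊆ univ, F.Finite ∧ V n = U n '' F := fun n ↦
    exists_subset_image_finite_and.1 ⟨V n, image_univ ▸ (hV n).1, (hV n).2, rfl⟩
  choose F _ hFfin hFV using hpre
  refine ⟨F, hFfin, ?_⟩
  simp_rw [← sUnion_image, ← hFV, ← sUnion_iUnion, hVcov]

theorem lindelofSpace (hM : Menger X) : LindelofSpace X where
  isLindelof_univ := isLindelof_of_countable_subcover fun U hUo hU ↦ by
    obtain ⟨F, hFfin, hFcov⟩ :=
      hM.exists_finite_subfamilies (fun _ ↦ U) (fun _ ↦ hUo) fun _ ↦ univ_subset_iff.1 hU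
    exact ⟨⋃ n, F n, countable_iUnion fun n ↦ (hFfin n).countable,
      by rw [biUnion_iUnion, hFcov]⟩

end Menger

section Tree

variable {T : Type*} (child : T → ℕ → T) (t₀ : T)

def treePath (f : ℕ → ℕ) : ℕ → T
  | 0 => t₀
  | n + 1 => child (treePath f n) (f n)

def treeLevel (κ : T → ℕ) : ℕ → Set T
  | 0 => {t₀}
  | n + 1 => ⋃ u ∈ treeLevel κ n, child u '' Iio (κ u)

theorem treeLevel_finite (κ : T → ℕ) (n : ℕ) : (treeLevel child t₀ κ n).Finite := by
  induction n with
  | zero => exact finite_singleton t₀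
  | succ n ih => exact ih.biUnion fun u _ ↦ (finite_Iio (κ u)).image (child u)

theorem treePath_mem_treeLevel {f : ℕ → ℕ} {κ : T → ℕ} {n : ℕ}
    (hf : ∀ j < n, f j < κ (treePath child t₀ f j)) :
    treePath child t₀ f n ∈ treeLevel child t₀ κ n := by
  induction n with
  | zero => exact mem_singleton t₀
  | succ n ih =>
    exact mem_biUnion (ih fun j hj ↦ hf j (hj.trans n.lt_succ_self))
      (mem_image_of_mem _ (hf n n.lt_succ_self))

variable {X : Type*}

def treeCovered (c : T → ℕ → Set X) (κ : T → ℕ) (n : ℕ) : Set X :=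
  ⋂ j ≤ n, ⋂ u ∈ treeLevel child t₀ κ j, ⋃ k < κ u, c u k

variable {child t₀} in
theorem mem_treeCovered {c : T → ℕ → Set X} {κ : T → ℕ} {n : ℕ} {x : X} :
    x ∈ treeCovered child t₀ c κ n ↔
      ∀ j ≤ n, ∀ u ∈ treeLevel child t₀ κ j, ∃ k < κ u, x ∈ c u k := by
  simp only [treeCovered, mem_iInter, mem_iUnion, exists_prop]

theorem iUnion_treeCovered {c : T → ℕ → Set X} (hc : ∀ u, ⋃ k, c u k = univ) (n : ℕ) :
    ⋃ κ, treeCovered child t₀ c κ n = univ := by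
  refine eq_univ_of_forall fun x ↦ ?_
  have hx : ∀ u, ∃ k, x ∈ c u k := fun u ↦ mem_iUnion.1 ((hc u).ge (mem_univ x))
  choose κ hκ using hx
  exact mem_iUnion.2
    ⟨fun u ↦ κ u + 1, mem_treeCovered.2 fun _ _ u _ ↦ ⟨κ u, (κ u).lt_succ_self, hκ u⟩⟩

variable [TopologicalSpace X]

theorem isOpen_treeCovered {c : T → ℕ → Set X} (hc : ∀ u k, IsOpen (c u k)) (κ : T → ℕ)
    (n : ℕ) : IsOpen (treeCovered child t₀ c κ n) :=
  (finite_Iic n).isOpen_biInter fun j _ ↦ (treeLevel_finite child t₀ κ j).isOpen_biInter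
    fun u _ ↦ isOpen_biUnion fun k _ ↦ hc u k

theorem Menger.exists_treePath_iUnion_eq_univ (hM : Menger X) {c : T → ℕ → Set X}
    (hco : ∀ u k, IsOpen (c u k)) (hcu : ∀ u, ⋃ k, c u k = univ) :
    ∃ f : ℕ → ℕ, ⋃ n, ⋃ k < f n, c (treePath child t₀ f n) k = univ := by
  obtain ⟨F, hFfin, hFcov⟩ :=
    hM.exists_finite_subfamilies (fun n κ ↦ treeCovered child t₀ c κ n)
    (fun n κ ↦ isOpen_treeCovered child t₀ hco κ n) (iUnion_treeCovered child t₀ hcu)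
  have hbdd : ∀ n, BddAbove (⋃ κ ∈ F n, κ '' treeLevel child t₀ κ n) := fun n ↦
    ((hFfin n).biUnion fun κ _ ↦ (treeLevel_finite child t₀ κ n).image κ).bddAbove
  choose f hf using hbdd
  refine ⟨f, eq_univ_of_forall fun x ↦ ?_⟩
  obtain ⟨n, κ, hκ, hx⟩ : ∃ n, ∃ κ ∈ F n, x ∈ treeCovered child t₀ c κ n := by
    simpa only [mem_iUnion, exists_prop] using hFcov.ge (mem_univ x)
  by_contra hxf
  have hbig : ∀ j k, x ∈ c (treePath child t₀ f j) k → f j ≤ k := fun j k hk ↦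
    not_lt.1 fun hlt ↦ hxf (mem_iUnion₂.2 ⟨j, k, mem_iUnion.2 ⟨hlt, hk⟩⟩)
  -- Since `x` escapes the play, `f` must stay inside the `κ`-tree up to depth `n`.
  have hpath : ∀ j ≤ n, treePath child t₀ f j ∈ treeLevel child t₀ κ j := by
    intro j
    induction j using Nat.strong_induction_on with
    | _ j ih =>
      intro hj
      refine treePath_mem_treeLevel child t₀ fun i hi ↦ ?_
      obtain ⟨k, hk, hxk⟩ := mem_treeCovered.1 hx i (by omega) _ (ih i hi (by omega))
      exact (hbig i k hxk).trans_lt hk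
  obtain ⟨k, hk, hxk⟩ := mem_treeCovered.1 hx n le_rfl _ (hpath n le_rfl)
  have hκf : κ (treePath child t₀ f n) ≤ f n :=
    hf n (mem_biUnion hκ (mem_image_of_mem κ (hpath n le_rfl)))
  exact (hbig n k hxk).not_gt (hk.trans_le hκf)

end Tree

section Game

variable {X : Type*} [TopologicalSpace X]

theorem exists_seq_subcover [LindelofSpace X] [Nonempty X] {𝒰 : Set (Set X)}
    (hUo : ∀ u ∈ 𝒰, IsOpen u) (hU : ⋃₀ 𝒰 = univ) :
    ∃ e : ℕ → Set X, (∀ k, e k ∈ 𝒰) ∧ ⋃ k, e k = univ := by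
  obtain ⟨x⟩ := ‹Nonempty X›
  obtain ⟨u, hu, -⟩ := hU.ge (mem_univ x)
  have : Nonempty 𝒰 := ⟨⟨u, hu⟩⟩
  obtain ⟨g, hg⟩ := isLindelof_univ.indexed_countable_subcover (fun u : 𝒰 ↦ (u : Set X))
    (fun u ↦ hUo u u.2) (by rw [← sUnion_eq_iUnion, hU])
  exact ⟨fun k ↦ g k, fun k ↦ (g k).2, univ_subset_iff.1 hg⟩

theorem Menger.of_not_exists_mengerWinningI (h : ¬ ∃ σ, MengerWinningI X σ) : Menger X := by
  intro U hU
  by_contra hV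
  have hmoves : ∀ V n, mMoves (fun h ↦ U h.length) V n = U n := fun V n ↦ by simp [mMoves]
  exact h ⟨fun h ↦ U h.length, fun V ↦ ⟨fun n _ ↦ hmoves V n ▸ hU n,
    fun hlegal hcov ↦ hV ⟨V, fun n ↦ hmoves V n ▸ hlegal n, hcov⟩⟩⟩

theorem Menger.not_mengerWinningI (hM : Menger X) (σ : List (Set (Set X)) → Set (Set X)) :
    ¬ MengerWinningI X σ := by
  intro hσ
  rcases isEmpty_or_nonempty X with hX | hX
  · exact (hσ fun _ ↦ ∅).2 (fun _ ↦ ⟨empty_subset _, finite_empty⟩)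
      (eq_univ_of_forall isEmptyElim)
  have := hM.lindelofSpace
  have hseq : ∀ h, ∃ e : ℕ → Set X,
      ((∀ u ∈ σ h, IsOpen u) ∧ ⋃₀ σ h = univ → ∀ k, e k ∈ σ h) ∧
      (∀ k, IsOpen (e k)) ∧ ⋃ k, e k = univ := by
    intro h
    by_cases hh : (∀ u ∈ σ h, IsOpen u) ∧ ⋃₀ σ h = univ
    · obtain ⟨e, he, hcov⟩ := exists_seq_subcover hh.1 hh.2
      exact ⟨e, fun _ ↦ he, fun k ↦ hh.1 _ (he k), hcov⟩
    · exact ⟨fun _ ↦ univ, fun h' ↦ absurd h' hh, fun _ ↦ isOpen_univ, iUnion_const _⟩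
  choose e he_mem he_open he_cov using hseq
  -- Nodes of the tree are histories of the game; answering `m` means playing the first `m` sets.
  let child h m := h ++ [e h '' Iio m]
  obtain ⟨f, hf⟩ := hM.exists_treePath_iUnion_eq_univ child [] he_open he_cov
  set p := treePath child [] f
  set V : ℕ → Set (Set X) := fun n ↦ e (p n) '' Iio (f n)
  have hmoves : ∀ n, mMoves σ V n = σ (p n) := by
    intro n
    refine congrArg σ ?_
    induction n with
    | zero => rfl
    | succ n ih =>
      simp only [List.ofFn_succ', Fin.val_castSucc, Fin.val_last, ih, List.concat_eq_append]
      rfl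
  have hVlegal : ∀ n, (∀ u ∈ σ (p n), IsOpen u) ∧ ⋃₀ σ (p n) = univ →
      V n ⊆ mMoves σ V n ∧ (V n).Finite := fun n hn ↦
    ⟨hmoves n ▸ image_subset_iff.2 fun k _ ↦ he_mem _ hn k, (finite_Iio _).image _⟩
  have hlegal : ∀ n, (∀ u ∈ σ (p n), IsOpen u) ∧ ⋃₀ σ (p n) = univ := by
    intro n
    induction n using Nat.strong_induction_on with
    | _ n ih => exact hmoves n ▸ (hσ V).1 n fun m hm ↦ hVlegal m (ih m hm)
  refine (hσ V).2 (fun n ↦ hVlegal n (hlegal n)) ?_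
  simpa only [V, sUnion_iUnion, sUnion_image, mem_Iio] using hf

end Game

/-- Hurewicz's theorem: a space is Menger iff player I has no winning strategy
in the Menger game. -/
theorem menger_iff_no_winning_strategy {X : Type*} [TopologicalSpace X] :
    Menger X ↔ ¬ ∃ σ, MengerWinningI X σ :=
  ⟨fun hM ⟨σ, hσ⟩ ↦ hM.not_mengerWinningI σ hσ, Menger.of_not_exists_mengerWinningI⟩
end

section
/- If X is a separable metrizable space and its Vietoris hyperspace K(X) is hereditarily Baire, then for every compact metrizable space Z containing X as a subspace, the remainder Z∖X is Menger. -/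
/-!
Suppose the remainder `Z \ f(X)` is not Menger. Its open covers, made increasing, give closed
sets `D n m` such that for every `a : ℕ → ℕ` some point of `closure (f X) \ f X` lies in every
`D n (a n)`. Along the tree of finite sequences `s` we build compact sets `A_s ⊆ f(X)`: `A_s`
contains its parent, the points of `f(X)` forced into all boxes below `s`, and a finite subset of
`f(X)` approximating, ever more finely, the remainder inside the box of `s`. Then `A_{s⌢m} → A_s`
as `m → ∞`, so the preimages `f⁻¹ A_s` form a countable subset of `K(X)` without isolated points.
It is also closed: along a sequence of nodes either a node recurs, or the children below a fixed
node escape to infinity (and the limit is again some `A_s`), or the nodes follow a branch `b`,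
whose limit would contain the point of `closure (f X) \ f X` attached to `b`. A countable closed
set without isolated points is not a Baire space, as `K(X)` is T₁.
-/

/-- The hyperspace of nonempty compact subsets of a topological space. -/
def Hyper (X : Type*) [TopologicalSpace X] : Type _ :=
  {K : Set X // IsCompact K ∧ K.Nonempty}

/-- The Vietoris topology on the hyperspace, generated by the sets
`{K : K ⊆ U}` and `{K : K ∩ U ≠ ∅}` for `U` open. -/
instance Hyper.instTopologicalSpace (X : Type*) [TopologicalSpace X] :
    TopologicalSpace (Hyper X) :=
  TopologicalSpace.generateFrom
    ({s | ∃ U : Set X, IsOpen U ∧ s = {K : Hyper X | K.1 ⊆ U}} ∪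
     {s | ∃ U : Set X, IsOpen U ∧ s = {K : Hyper X | (K.1 ∩ U).Nonempty}})

/-- A space is hereditarily Baire if every closed subspace is a Baire space. -/
def HereditarilyBaire (X : Type*) [TopologicalSpace X] : Prop :=
  ∀ C : Set X, IsClosed C → BaireSpace C

open Set Filter Topology Metric

namespace Hyper

variable {X : Type*} [TopologicalSpace X]

lemma isOpen_setOf_subset {U : Set X} (hU : IsOpen U) : IsOpen {K : Hyper X | K.1 ⊆ U} :=
  TopologicalSpace.isOpen_generateFrom_of_mem (Or.inl ⟨U, hU, rfl⟩)

lemma isOpen_setOf_inter_nonempty {U : Set X} (hU : IsOpen U) :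
    IsOpen {K : Hyper X | (K.1 ∩ U).Nonempty} :=
  TopologicalSpace.isOpen_generateFrom_of_mem (Or.inr ⟨U, hU, rfl⟩)

instance [T2Space X] : T1Space (Hyper X) := by
  refine t1Space_iff_exists_open.2 fun A B hAB => ?_
  by_cases hBA : B.1 ⊆ A.1
  · obtain ⟨a, haA, haB⟩ : ∃ a ∈ A.1, a ∉ B.1 :=
      not_subset.1 fun hAB' => hAB (Subtype.ext (hAB'.antisymm hBA))
    exact ⟨_, isOpen_setOf_inter_nonempty B.2.1.isClosed.isOpen_compl, ⟨a, haA, haB⟩,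
      fun ⟨b, hbB, hb⟩ => hb hbB⟩
  · obtain ⟨b, hbB, hbA⟩ := not_subset.1 hBA
    exact ⟨_, isOpen_setOf_subset isOpen_compl_singleton,
      fun a haA (hab : a = b) => hbA (hab ▸ haA), fun h => h hbB rfl⟩

lemma tendsto_of_forall_subset {ι : Type*} {l : Filter ι} {κ : ι → Hyper X} {B : Hyper X}
    (hsub : ∀ i, B.1 ⊆ (κ i).1)
    (hupper : ∀ U, IsOpen U → B.1 ⊆ U → ∀ᶠ i in l, (κ i).1 ⊆ U) :
    Tendsto κ l (𝓝 B) := by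
  rw [TopologicalSpace.tendsto_nhds_generateFrom_iff]
  rintro s (⟨U, hU, rfl⟩ | ⟨U, hU, rfl⟩) hB
  · exact hupper U hU hB
  · exact Eventually.of_forall fun i => hB.mono (inter_subset_inter_left U (hsub i))

variable {Z : Type*} [PseudoMetricSpace Z] {f : X → Z}

lemma eventually_image_subset_thickening (hf : Continuous f) (B : Hyper X) {ε : ℝ}
    (hε : 0 < ε) :
    ∀ᶠ K in 𝓝 B, f '' K.1 ⊆ thickening ε (f '' B.1) ∧ f '' B.1 ⊆ thickening ε (f '' K.1) := by
  have hfB : IsCompact (f '' B.1) := B.2.1.image hf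
  obtain ⟨N, hNB, hNfin, hNcov⟩ := hfB.elim_finite_subcover_image (b := f '' B.1)
    (fun x _ => isOpen_ball (ε := ε / 2))
    fun x hx => mem_biUnion hx (mem_ball_self (half_pos hε))
  have hupper : ∀ᶠ K in 𝓝 B, f '' K.1 ⊆ thickening ε (f '' B.1) := by
    filter_upwards [(isOpen_setOf_subset (isOpen_thickening.preimage hf)).mem_nhds
      fun x hx => self_subset_thickening hε _ (mem_image_of_mem f hx)] with K hK
    exact image_subset_iff.2 hK
  have hlower : ∀ᶠ K in 𝓝 B, ∀ x ∈ N, (K.1 ∩ f ⁻¹' ball x (ε / 2)).Nonempty :=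
    (hNfin.eventually_all).2 fun x hx =>
      (isOpen_setOf_inter_nonempty (isOpen_ball.preimage hf)).mem_nhds <| by
        obtain ⟨b, hb, rfl⟩ := hNB hx
        exact ⟨b, hb, mem_ball_self (half_pos hε)⟩
  filter_upwards [hupper, hlower] with K hKup hKlow
  refine ⟨hKup, fun z hz => ?_⟩
  obtain ⟨x, hxN, hzx⟩ := mem_iUnion₂.1 (hNcov hz)
  obtain ⟨k, hkK, hkx⟩ := hKlow x hxN
  refine mem_thickening_iff.2 ⟨f k, mem_image_of_mem f hkK, ?_⟩
  calc dist z (f k) ≤ dist z x + dist (f k) x := dist_triangle_right _ _ _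
    _ < ε / 2 + ε / 2 := add_lt_add hzx hkx
    _ = ε := add_halves ε

end Hyper

lemma HereditarilyBaire.eq_empty_of_perfect_of_countable {Y : Type*} [TopologicalSpace Y]
    [T1Space Y] (h : HereditarilyBaire Y) {Q : Set Y} (hQ : Perfect Q) (hc : Q.Countable) :
    Q = ∅ := by
  have : BaireSpace Q := h Q hQ.closed
  have : Countable Q := hc.to_subtype
  have hdense : ∀ q : Q, Dense ({q}ᶜ : Set Q) := fun q =>
    dense_compl_singleton_iff_not_open.2 fun hopen => by
      obtain ⟨U, hU, hUq⟩ := isOpen_induced_iff.1 hopen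
      have hqU : (q : Y) ∈ U := by simpa using congrArg (q ∈ ·) hUq
      obtain ⟨y, ⟨hyU, hyQ⟩, hyq⟩ := preperfect_iff_nhds.1 hQ.acc q q.2 U (hU.mem_nhds hqU)
      have : (⟨y, hyQ⟩ : Q) ∈ ({q} : Set Q) := hUq ▸ hyU
      exact hyq (congrArg Subtype.val this)
  refine eq_empty_of_forall_notMem fun q hq => ?_
  have : Nonempty Q := ⟨⟨q, hq⟩⟩
  obtain ⟨x, hx⟩ := (dense_iInter_of_isOpen (fun q : Q => isOpen_compl_singleton) hdense).nonempty
  exact mem_iInter.1 hx x rfl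

section MengerCovers

variable {Y : Type*} [TopologicalSpace Y]

lemma exists_monotone_open_covers_of_not_menger [SecondCountableTopology Y] (h : ¬ Menger Y) :
    ∃ V : ℕ → ℕ → Set Y, (∀ n m, IsOpen (V n m)) ∧ (∀ n, Monotone (V n)) ∧
      (∀ n, ⋃ m, V n m = univ) ∧ ∀ a : ℕ → ℕ, ⋃ n, V n (a n) ≠ univ := by
  simp only [Menger, not_forall, not_exists, not_and] at h
  obtain ⟨U, hU, hbad⟩ := h
  have hY : Nonempty Y := by
    by_contra hY
    exact hbad (fun _ => ∅) (fun _ => ⟨empty_subset _, finite_empty⟩)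
      (eq_univ_of_forall fun y => (hY ⟨y⟩).elim)
  have hsub : ∀ n, ∃ e : ℕ → Set Y, range e ⊆ U n ∧ ⋃ j, e j = univ := fun n => by
    obtain ⟨T, hTc, hTU, hT⟩ := TopologicalSpace.isOpen_sUnion_countable (U n) (hU n).1
    rw [(hU n).2] at hT
    obtain ⟨e, rfl⟩ := hTc.exists_eq_range (Nonempty.of_sUnion_eq_univ hT)
    exact ⟨e, hTU, by rwa [← sUnion_range]⟩
  choose e heU he using hsub
  refine ⟨fun n m => ⋃ j ≤ m, e n j,
    fun n m => isOpen_biUnion fun j _ => (hU n).1 _ (heU n ⟨j, rfl⟩),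
    fun n m m' hm => biUnion_subset_biUnion_left fun j (hj : j ≤ m) => hj.trans hm,
    fun n => eq_univ_of_univ_subset ((he n).symm.subset.trans
      (iUnion_mono fun j => subset_biUnion_of_mem (le_refl j))), fun a ha => ?_⟩
  refine hbad (fun n => e n '' Iic (a n))
    (fun n => ⟨(image_subset_range _ _).trans (heU n), (finite_Iic _).image _⟩) ?_
  refine eq_univ_of_univ_subset (ha.symm.subset.trans fun y hy => ?_)
  obtain ⟨n, hn⟩ := mem_iUnion.1 hy
  obtain ⟨j, hj, hyj⟩ := mem_iUnion₂.1 hn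
  exact ⟨e n j, mem_iUnion.2 ⟨n, j, hj, rfl⟩, hyj⟩

/-- The odd-indexed covers are spent on the compact sets `K k`, the even-indexed ones remain. -/
lemma exists_monotone_open_covers_of_not_menger_of_isCompact [SecondCountableTopology Y]
    (h : ¬ Menger Y) {K : ℕ → Set Y} (hK : ∀ k, IsCompact (K k)) :
    ∃ V : ℕ → ℕ → Set Y, (∀ n m, IsOpen (V n m)) ∧ (∀ n, Monotone (V n)) ∧
      (∀ n, ⋃ m, V n m = univ) ∧ ∀ a : ℕ → ℕ, ∃ y, (∀ k, y ∉ K k) ∧ ∀ n, y ∉ V n (a n) := by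
  obtain ⟨V, hVo, hVm, hVc, hdiag⟩ := exists_monotone_open_covers_of_not_menger h
  have hKV : ∀ k, ∃ m, K k ⊆ V (2 * k + 1) m := fun k =>
    (hK k).elim_directed_cover _ (hVo _) ((hVc _).symm ▸ subset_univ _) (hVm _).directed_le
  choose b hb using hKV
  refine ⟨fun n => V (2 * n), fun n => hVo _, fun n => hVm _, fun n => hVc _, fun a => ?_⟩
  obtain ⟨y, hy⟩ := (ne_univ_iff_exists_notMem _).1
    (hdiag fun n => if n % 2 = 0 then a (n / 2) else b (n / 2))
  simp only [mem_iUnion, not_exists] at hy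
  refine ⟨y, fun k hyk => hy (2 * k + 1) ?_, fun n hyn => hy (2 * n) ?_⟩
  · simpa [Nat.add_mod, show (2 * k + 1) / 2 = k by omega] using hb k hyk
  · simpa using hyn

end MengerCovers

/-- For every `n`, the complements of the sets `D n m` form an increasing open cover of the
remainder `Sᶜ`; yet for every selection `a`, the sets `(D n (a n))ᶜ` miss the point
`escape a` of `closure S \ S`. -/
structure NonMengerSystem {Z : Type*} [TopologicalSpace Z] (S : Set Z) where
  D : ℕ → ℕ → Set Z
  isClosed_D : ∀ n m, IsClosed (D n m)
  antitone_D : ∀ n, Antitone (D n)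
  iInter_D_subset : ∀ n, ⋂ m, D n m ⊆ S
  escape : (ℕ → ℕ) → Z
  escape_mem : ∀ a, escape a ∈ closure S \ S
  escape_mem_D : ∀ a n, escape a ∈ D n (a n)

theorem NonMengerSystem.nonempty_of_not_menger {Z : Type*} [MetricSpace Z] [CompactSpace Z]
    {S : Set Z} (h : ¬ Menger ↥Sᶜ) : Nonempty (NonMengerSystem S) := by
  obtain ⟨F, hFc, hFS, hFU, -⟩ :=
    isClosed_closure.isOpen_compl.exists_iUnion_isClosed (U := (closure S)ᶜ)
  have hFS' : ∀ k, F k ⊆ range ((↑) : ↥Sᶜ → Z) := fun k => by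
    rw [Subtype.range_coe]
    exact (hFS k).trans (compl_subset_compl.2 subset_closure)
  obtain ⟨V, hVo, hVm, hVc, hdiag⟩ := exists_monotone_open_covers_of_not_menger_of_isCompact h
    (K := fun k => (↑) ⁻¹' F k) fun k =>
      (IsInducing.subtypeVal.isCompact_preimage_iff (hFS' k)).2 (hFc k).isCompact
  choose O hOo hOV using fun n m => isOpen_induced_iff.1 (hVo n m)
  choose y hyF hyV using hdiag
  refine ⟨⟨fun n m => (⋃ j ≤ m, O n j)ᶜ,
    fun n m => (isOpen_biUnion fun j _ => hOo n j).isClosed_compl,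
    fun n m m' hm => compl_subset_compl.2
      (biUnion_subset_biUnion_left fun j (hj : j ≤ m) => hj.trans hm),
    fun n z hz => ?_, fun a => y a, fun a => ⟨?_, (y a).2⟩, fun a n => ?_⟩⟩
  · by_contra hzS
    obtain ⟨m, hm⟩ := mem_iUnion.1 ((hVc n).symm ▸ mem_univ (⟨z, hzS⟩ : ↥Sᶜ))
    exact mem_iInter.1 hz m (mem_biUnion (le_refl m) (by rw [← hOV n m] at hm; exact hm))
  · by_contra hy
    obtain ⟨k, hk⟩ := mem_iUnion.1 (hFU.symm ▸ hy : (y a : Z) ∈ ⋃ k, F k)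
    exact hyF a k hk
  · simp only [mem_compl_iff, mem_iUnion, not_exists]
    intro j hj hyj
    exact hyV a n (hVm n hj (by rw [← hOV n j]; exact hyj))

section Thickening

variable {Z : Type*} [MetricSpace Z]

lemma exists_finite_subset_thickening {K S : Set Z} (hK : IsCompact K) (hKS : K ⊆ closure S)
    {ε : ℝ} (hε : 0 < ε) :
    ∃ F ⊆ S, F.Finite ∧ K ⊆ thickening ε F ∧ F ⊆ thickening ε K := by
  have hcov : K ⊆ ⋃ x ∈ S ∩ thickening ε K, ball x ε := fun p hp => by
    obtain ⟨x, hxS, hpx⟩ := Metric.mem_closure_iff.1 (hKS hp) ε hε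
    exact mem_biUnion ⟨hxS, mem_thickening_iff.2 ⟨p, hp, by rwa [dist_comm]⟩⟩ (mem_ball.2 hpx)
  obtain ⟨F, hFsub, hFfin, hFcov⟩ := hK.elim_finite_subcover_image (fun _ _ => isOpen_ball) hcov
  refine ⟨F, fun x hx => (hFsub hx).1, hFfin, fun p hp => ?_, fun x hx => (hFsub hx).2⟩
  obtain ⟨x, hxF, hpx⟩ := mem_iUnion₂.1 (hFcov hp)
  exact mem_thickening_iff.2 ⟨x, hxF, hpx⟩

lemma eventually_thickening_subset_of_antitone {s : ℕ → Set Z} (hs : Antitone s)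
    (hsc : ∀ n, IsCompact (s n)) {V : Set Z} (hV : IsOpen V) (hsV : ⋂ n, s n ⊆ V)
    {ε : ℕ → ℝ} (hε : Tendsto ε atTop (𝓝 0)) :
    ∀ᶠ n in atTop, thickening (ε n) (s n) ⊆ V := by
  obtain ⟨n₀, hn₀⟩ := exists_subset_nhds_of_isCompact' hs.directed_ge hsc
    (fun n => (hsc n).isClosed) fun x hx => hV.mem_nhds (hsV hx)
  obtain ⟨δ, hδ, hδV⟩ := (hsc n₀).exists_thickening_subset_open hV hn₀
  filter_upwards [eventually_ge_atTop n₀, (tendsto_order.1 hε).2 δ hδ] with n hn hεn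
  exact (thickening_mono hεn.le _).trans ((thickening_subset_of_subset δ (hs hn)).trans hδV)

variable {A : ℕ → Set Z} {K C : Set Z}

lemma subset_of_frequently_subset (hK : IsClosed K)
    (hA : ∀ ε > 0, ∀ᶠ n in atTop, A n ⊆ thickening ε K) (hC : ∃ᶠ n in atTop, C ⊆ A n) :
    C ⊆ K := fun x hx => hK.closure_subset <| Metric.mem_closure_iff.2 fun ε hε => by
  obtain ⟨n, hCn, hn⟩ := (hC.and_eventually (hA ε hε)).exists
  exact mem_thickening_iff.1 (hn (hCn hx))

lemma subset_of_frequently_subset' (hC : IsClosed C)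
    (hA : ∀ ε > 0, ∀ᶠ n in atTop, K ⊆ thickening ε (A n)) (hAC : ∃ᶠ n in atTop, A n ⊆ C) :
    K ⊆ C := fun x hx => hC.closure_subset <| Metric.mem_closure_iff.2 fun ε hε => by
  obtain ⟨n, hn, hKn⟩ := (hAC.and_eventually (hA ε hε)).exists
  obtain ⟨y, hy, hxy⟩ := mem_thickening_iff.1 (hKn hx)
  exact ⟨y, hn hy, hxy⟩

end Thickening

section Tree

/-- The node at depth `k` on the branch `b`: lists grow at the head, so the head of a node is
its deepest coordinate. -/
def branchNode (b : ℕ → ℕ) : ℕ → List ℕ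
  | 0 => []
  | k + 1 => b k :: branchNode b k

@[simp]
lemma length_branchNode (b : ℕ → ℕ) (k : ℕ) : (branchNode b k).length = k := by
  induction k with
  | zero => rfl
  | succ k ih => simp [branchNode, ih]

lemma List.exists_cons_suffix {α : Type*} {u t : List α} (h : u <:+ t) (hne : u ≠ t) :
    ∃ m, m :: u <:+ t := by
  induction t with
  | nil => exact absurd (List.suffix_nil.1 h) hne
  | cons a t ih =>
    rcases List.suffix_cons_iff.1 h with rfl | h
    · exact absurd rfl hne
    · by_cases hut : u = t
      · exact ⟨a, hut ▸ List.suffix_refl _⟩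
      · obtain ⟨m, hm⟩ := ih h hut
        exact ⟨m, hm.trans (List.suffix_cons a t)⟩

lemma frequently_trichotomy (g : ℕ → List ℕ) :
    (∃ l, ∃ᶠ n in atTop, g n = l) ∨
    (∃ u, ∀ M, ∃ᶠ n in atTop, ∃ m ≥ M, m :: u <:+ g n) ∨
    (∃ b : ℕ → ℕ, ∀ k, ∃ᶠ n in atTop, branchNode b k <:+ g n) := by
  set T : Set (List ℕ) := {l | ∃ᶠ n in atTop, l <:+ g n}
  have hnil : [] ∈ T := Frequently.of_forall fun n => List.nil_suffix
  by_cases hclimb : ∀ l ∈ T, ∃ m, m :: l ∈ T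
  · choose ch hch using hclimb
    let node : ℕ → T := fun k =>
      Nat.rec ⟨[], hnil⟩ (fun _ l => ⟨ch l.1 l.2 :: l.1, hch l.1 l.2⟩) k
    refine Or.inr (Or.inr ⟨fun k => ch (node k).1 (node k).2, fun k => ?_⟩)
    have hnode : branchNode (fun k => ch (node k).1 (node k).2) k = (node k).1 := by
      induction k with
      | zero => rfl
      | succ k ih => simp only [branchNode, ih]; rfl
    exact hnode ▸ (node k).2
  push Not at hclimb
  obtain ⟨u, huT, hu⟩ := hclimb
  by_cases hstable : ∃ᶠ n in atTop, g n = u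
  · exact Or.inl ⟨u, hstable⟩
  refine Or.inr (Or.inl ⟨u, fun M => ?_⟩)
  have hsmall : ∀ᶠ n in atTop, ∀ m ∈ Finset.range M, ¬ m :: u <:+ g n :=
    (Finset.range M).eventually_all.2 fun m _ => not_frequently.1 (hu m)
  refine (huT.and_eventually ((not_frequently.1 hstable).and hsmall)).mono ?_
  rintro n ⟨hsuf, hne, hlarge⟩
  obtain ⟨m, hm⟩ := List.exists_cons_suffix hsuf (Ne.symm hne)
  exact ⟨m, not_lt.1 fun hlt => hlarge m (Finset.mem_range.2 hlt) hm, hm⟩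

end Tree

/-- The radius at node `l`: it tends to `0` along every branch and along the children of a node. -/
noncomputable def radius (l : List ℕ) : ℝ := (1 / 2 : ℝ) ^ (l.length + l.sum)

lemma radius_pos (l : List ℕ) : 0 < radius l := by unfold radius; positivity

lemma radius_le_pow_length (l : List ℕ) : radius l ≤ (1 / 2 : ℝ) ^ l.length :=
  pow_le_pow_of_le_one (by norm_num) (by norm_num) (Nat.le_add_right _ _)

lemma radius_le_pow_of_mem {l : List ℕ} {m : ℕ} (h : m ∈ l) : radius l ≤ (1 / 2 : ℝ) ^ m :=
  pow_le_pow_of_le_one (by norm_num) (by norm_num)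
    ((List.le_sum_of_mem h).trans (Nat.le_add_left _ _))

namespace NonMengerSystem

variable {Z : Type*} [MetricSpace Z] {S : Set Z} (P : NonMengerSystem S)

/-- The points obeying the constraints `D i (l.reverse[i])` of the node `l`. -/
def box : List ℕ → Set Z
  | [] => univ
  | m :: l => box l ∩ P.D l.length m

lemma isClosed_box (l : List ℕ) : IsClosed (P.box l) := by
  induction l with
  | nil => exact isClosed_univ
  | cons m l ih => exact ih.inter (P.isClosed_D _ _)

lemma antitone_box_cons (l : List ℕ) : Antitone fun m => P.box (m :: l) :=
  fun _ _ h => inter_subset_inter_right _ (P.antitone_D _ h)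

lemma box_subset_of_suffix {t l : List ℕ} (h : t <:+ l) : P.box l ⊆ P.box t := by
  induction l with
  | nil => rw [List.suffix_nil.1 h]
  | cons m l ih =>
    rcases List.suffix_cons_iff.1 h with rfl | h
    · exact Subset.rfl
    · exact inter_subset_left.trans (ih h)

lemma escape_mem_box {a : ℕ → ℕ} {l : List ℕ}
    (h : ∀ i (hi : i < l.length), a i = l.reverse[i]'(by simpa using hi)) :
    P.escape a ∈ P.box l := by
  induction l with
  | nil => exact mem_univ _
  | cons m l ih =>
    refine ⟨ih fun i hi => ?_, ?_⟩
    · rw [h i (by simp; omega)]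
      simp [List.getElem_append_left, hi]
    · simpa [h l.length (by simp)] using P.escape_mem_D a l.length

lemma escape_mem_box_branchNode (b : ℕ → ℕ) (k : ℕ) : P.escape b ∈ P.box (branchNode b k) := by
  induction k with
  | zero => exact mem_univ _
  | succ k ih => exact ⟨ih, by simpa using P.escape_mem_D b k⟩

def core (l : List ℕ) : Set Z := ⋂ m, P.box (m :: l)

lemma isClosed_core (l : List ℕ) : IsClosed (P.core l) :=
  isClosed_iInter fun _ => P.isClosed_box _

lemma core_subset (l : List ℕ) : P.core l ⊆ S :=
  (iInter_mono fun _ => inter_subset_right).trans (P.iInter_D_subset _)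

lemma core_subset_box (l : List ℕ) : P.core l ⊆ P.box l :=
  (iInter_subset _ 0).trans inter_subset_left

def remainderBox (l : List ℕ) : Set Z := closure ((closure S \ S) ∩ P.box l)

lemma remainderBox_subset_box (l : List ℕ) : P.remainderBox l ⊆ P.box l :=
  closure_minimal inter_subset_right (P.isClosed_box l)

lemma remainderBox_subset_closure (l : List ℕ) : P.remainderBox l ⊆ closure S :=
  closure_minimal (inter_subset_left.trans sdiff_subset) isClosed_closure

lemma exists_mem_remainderBox_notMem (l : List ℕ) : ∃ y ∈ P.remainderBox l, y ∉ S := by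
  have hy := P.escape_mem_box (a := fun i => l.reverse.getD i 0) (l := l) fun i hi => by
    simp [List.getElem?_eq_getElem (by simpa using hi : i < l.reverse.length)]
  exact ⟨_, subset_closure ⟨P.escape_mem _, hy⟩, (P.escape_mem _).2⟩

/-- `A` is the parent's set: leaving it keeps each node's set different from its parent's. -/
def IsNet (l : List ℕ) (A F : Set Z) : Prop :=
  F.Finite ∧ F ⊆ S ∧ P.remainderBox l ⊆ thickening (radius l) F ∧
    F ⊆ thickening (radius l) (P.remainderBox l) ∧ ¬ F ⊆ A

lemma exists_isNet [CompactSpace Z] (l : List ℕ) {A : Set Z} (hA : IsClosed A) (hAS : A ⊆ S) :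
    ∃ F, P.IsNet l A F := by
  obtain ⟨F, hFS, hFfin, hF, hF'⟩ := exists_finite_subset_thickening isClosed_closure.isCompact
    (P.remainderBox_subset_closure l) (radius_pos l)
  obtain ⟨y, hy, hyS⟩ := P.exists_mem_remainderBox_notMem l
  obtain ⟨x, ⟨hxA, hxS⟩, hxy⟩ := Metric.mem_closure_iff.1
    (hA.isOpen_compl.inter_closure ⟨fun hyA => hyS (hAS hyA), P.remainderBox_subset_closure l hy⟩)
    _ (radius_pos l)
  refine ⟨insert x F, hFfin.insert x, insert_subset hxS hFS,
    hF.trans (thickening_subset_of_subset _ (subset_insert x F)),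
    insert_subset (mem_thickening_iff.2 ⟨y, hy, by rwa [dist_comm]⟩) hF',
    fun h => hxA (h (mem_insert x F))⟩

noncomputable def net (l : List ℕ) (A : Set Z) : Set Z := Classical.epsilon (P.IsNet l A)

lemma isNet_net [CompactSpace Z] (l : List ℕ) {A : Set Z} (hA : IsClosed A) (hAS : A ⊆ S) :
    P.IsNet l A (P.net l A) :=
  Classical.epsilon_spec (P.exists_isNet l hA hAS)

noncomputable def nodeSet : List ℕ → Set Z
  | [] => P.core [] ∪ P.net [] ∅
  | m :: l => nodeSet l ∪ (P.core (m :: l) ∪ P.net (m :: l) (nodeSet l))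

lemma nodeSet_subset_of_suffix {t l : List ℕ} (h : t <:+ l) : P.nodeSet t ⊆ P.nodeSet l := by
  induction l with
  | nil => rw [List.suffix_nil.1 h]
  | cons m l ih =>
    rcases List.suffix_cons_iff.1 h with rfl | h
    · exact Subset.rfl
    · exact (ih h).trans subset_union_left

variable [CompactSpace Z]

lemma isClosed_nodeSet_and_subset (l : List ℕ) : IsClosed (P.nodeSet l) ∧ P.nodeSet l ⊆ S := by
  induction l with
  | nil =>
    have h := P.isNet_net [] isClosed_empty (empty_subset S)
    exact ⟨(P.isClosed_core []).union h.1.isClosed, union_subset (P.core_subset []) h.2.1⟩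
  | cons m l ih =>
    have h := P.isNet_net (m :: l) ih.1 ih.2
    exact ⟨ih.1.union ((P.isClosed_core _).union h.1.isClosed),
      union_subset ih.2 (union_subset (P.core_subset _) h.2.1)⟩

lemma isClosed_nodeSet (l : List ℕ) : IsClosed (P.nodeSet l) :=
  (P.isClosed_nodeSet_and_subset l).1

lemma nodeSet_subset (l : List ℕ) : P.nodeSet l ⊆ S := (P.isClosed_nodeSet_and_subset l).2

lemma exists_isNet_nodeSet_eq (l : List ℕ) :
    ∃ A, P.IsNet l A (P.net l A) ∧ P.nodeSet l = A ∪ (P.core l ∪ P.net l A) := by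
  cases l with
  | nil => exact ⟨∅, P.isNet_net [] isClosed_empty (empty_subset S), (empty_union _).symm⟩
  | cons m l =>
    exact ⟨P.nodeSet l, P.isNet_net _ (P.isClosed_nodeSet l) (P.nodeSet_subset l), rfl⟩

lemma core_subset_nodeSet (l : List ℕ) : P.core l ⊆ P.nodeSet l := by
  obtain ⟨A, -, hl⟩ := P.exists_isNet_nodeSet_eq l
  exact hl ▸ subset_union_left.trans subset_union_right

lemma nodeSet_nonempty (l : List ℕ) : (P.nodeSet l).Nonempty := by
  obtain ⟨A, hnet, hl⟩ := P.exists_isNet_nodeSet_eq l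
  obtain ⟨x, hx, -⟩ := not_subset.1 hnet.2.2.2.2
  exact ⟨x, hl ▸ Or.inr (Or.inr hx)⟩

lemma remainderBox_subset_thickening_nodeSet (l : List ℕ) :
    P.remainderBox l ⊆ thickening (radius l) (P.nodeSet l) := by
  obtain ⟨A, hnet, hl⟩ := P.exists_isNet_nodeSet_eq l
  exact hnet.2.2.1.trans
    (thickening_subset_of_subset _ (hl ▸ subset_union_right.trans subset_union_right))

lemma not_nodeSet_cons_subset (m : ℕ) (l : List ℕ) : ¬ P.nodeSet (m :: l) ⊆ P.nodeSet l :=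
  fun h => (P.isNet_net (m :: l) (P.isClosed_nodeSet l) (P.nodeSet_subset l)).2.2.2.2
    (subset_union_right.trans subset_union_right |>.trans h)

lemma nodeSet_cons_subset (m : ℕ) (l : List ℕ) :
    P.nodeSet (m :: l) ⊆ P.nodeSet l ∪ thickening (radius (m :: l)) (P.box (m :: l)) := by
  have hnet := P.isNet_net (m :: l) (P.isClosed_nodeSet l) (P.nodeSet_subset l)
  refine union_subset_union_right _ (union_subset ?_ ?_)
  · exact (P.core_subset_box _).trans (self_subset_thickening (radius_pos _) _)
  · exact hnet.2.2.2.1.trans (thickening_subset_of_subset _ (P.remainderBox_subset_box _))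

lemma nodeSet_subset_union_thickening {m : ℕ} {u l : List ℕ} (h : m :: u <:+ l) :
    P.nodeSet l ⊆ P.nodeSet u ∪ thickening ((1 / 2) ^ m) (P.box (m :: u)) := by
  induction l with
  | nil => exact absurd (List.suffix_nil.1 h) (List.cons_ne_nil m u)
  | cons k l ih =>
    refine (P.nodeSet_cons_subset k l).trans (union_subset ?_ ?_)
    · rcases List.suffix_cons_iff.1 h with h | h
      · cases h
        exact subset_union_left
      · exact ih h
    · refine subset_union_of_subset_right ((thickening_mono ?_ _).trans
        (thickening_subset_of_subset _ (P.box_subset_of_suffix h))) _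
      exact radius_le_pow_of_mem (h.subset List.mem_cons_self)

section Limits

variable {K : Set Z} {g : ℕ → List ℕ}

lemma subset_nodeSet_of_frequently_cons_suffix {u : List ℕ}
    (hlow : ∀ ε > 0, ∀ᶠ n in atTop, K ⊆ thickening ε (P.nodeSet (g n)))
    (hu : ∀ M, ∃ᶠ n in atTop, ∃ m ≥ M, m :: u <:+ g n) : K ⊆ P.nodeSet u := by
  intro x hx
  by_contra hxu
  obtain ⟨δ, hδ, hball⟩ := Metric.isOpen_iff.1 (P.isClosed_nodeSet u).isOpen_compl x hxu
  refine hxu (P.core_subset_nodeSet u (mem_iInter.2 fun M => ?_))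
  refine (P.isClosed_box _).closure_subset (Metric.mem_closure_iff.2 fun ε hε => ?_)
  obtain ⟨M', hM'⟩ := exists_pow_lt_of_lt_one (half_pos hε) (by norm_num : (1 / 2 : ℝ) < 1)
  obtain ⟨n, ⟨m, hm, hmu⟩, hn⟩ :=
    ((hu (max M M')).and_eventually (hlow (min δ (ε / 2)) (by positivity))).exists
  obtain ⟨z, hz, hxz⟩ := mem_thickening_iff.1 (hn hx)
  have hzu : z ∉ P.nodeSet u :=
    hball (mem_ball'.2 (hxz.trans_le (min_le_left _ _)))
  obtain ⟨w, hw, hzw⟩ :=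
    mem_thickening_iff.1 ((P.nodeSet_subset_union_thickening hmu hz).resolve_left hzu)
  refine ⟨w, P.antitone_box_cons u (le_of_max_le_left hm) hw, ?_⟩
  calc dist x w ≤ dist x z + dist z w := dist_triangle _ _ _
    _ < ε / 2 + ε / 2 := add_lt_add (hxz.trans_le (min_le_right _ _))
        (hzw.trans_le ((pow_le_pow_of_le_one (by norm_num) (by norm_num)
          (le_of_max_le_right hm)).trans hM'.le))
    _ = ε := add_halves ε

/-- The escape point of the branch would lie in `K ⊆ S`. -/
lemma not_forall_frequently_branchNode_suffix (hK : IsClosed K) (hKS : K ⊆ S)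
    (hup : ∀ ε > 0, ∀ᶠ n in atTop, P.nodeSet (g n) ⊆ thickening ε K) (b : ℕ → ℕ) :
    ¬ ∀ k, ∃ᶠ n in atTop, branchNode b k <:+ g n := by
  intro hb
  refine (P.escape_mem b).2 (hKS (hK.closure_subset (Metric.mem_closure_iff.2 fun ε hε => ?_)))
  obtain ⟨k, hk⟩ := exists_pow_lt_of_lt_one (half_pos hε) (by norm_num : (1 / 2 : ℝ) < 1)
  have hy : P.escape b ∈ P.remainderBox (branchNode b k) :=
    subset_closure ⟨P.escape_mem b, P.escape_mem_box_branchNode b k⟩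
  obtain ⟨x, hx, hyx⟩ := mem_thickening_iff.1 (P.remainderBox_subset_thickening_nodeSet _ hy)
  obtain ⟨n, hsuf, hn⟩ := ((hb k).and_eventually (hup (ε / 2) (half_pos hε))).exists
  obtain ⟨q, hq, hxq⟩ := mem_thickening_iff.1 (hn (P.nodeSet_subset_of_suffix hsuf hx))
  refine ⟨q, hq, ?_⟩
  calc dist (P.escape b) q ≤ dist (P.escape b) x + dist x q := dist_triangle _ _ _
    _ < ε / 2 + ε / 2 := add_lt_add
        (hyx.trans_le ((radius_le_pow_length _).trans (by simpa using hk.le))) hxq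
    _ = ε := add_halves ε

end Limits

end NonMengerSystem

namespace NonMengerSystem

variable {Z : Type*} [MetricSpace Z] [CompactSpace Z] {X : Type*} [TopologicalSpace X]
  {f : X → Z} (hf : IsEmbedding f) (P : NonMengerSystem (range f))

noncomputable def toHyper (l : List ℕ) : Hyper X :=
  ⟨f ⁻¹' P.nodeSet l, (hf.isInducing.isCompact_preimage_iff (P.nodeSet_subset l)).2
    (P.isClosed_nodeSet l).isCompact, (P.nodeSet_nonempty l).preimage' (P.nodeSet_subset l)⟩

lemma image_toHyper (l : List ℕ) : f '' (P.toHyper hf l).1 = P.nodeSet l :=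
  image_preimage_eq_of_subset (P.nodeSet_subset l)

lemma toHyper_eq_of_image_eq {B : Hyper X} {l : List ℕ} (h : f '' B.1 = P.nodeSet l) :
    P.toHyper hf l = B :=
  Subtype.ext (show f ⁻¹' P.nodeSet l = B.1 by rw [← h, hf.injective.preimage_image])

lemma tendsto_toHyper_cons (l : List ℕ) :
    Tendsto (fun m => P.toHyper hf (m :: l)) atTop (𝓝 (P.toHyper hf l)) := by
  refine Hyper.tendsto_of_forall_subset
    (fun m => preimage_mono (P.nodeSet_subset_of_suffix (List.suffix_cons m l)))
    fun U hU hlU => ?_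
  obtain ⟨V, hV, rfl⟩ := hf.isInducing.isOpen_iff.1 hU
  have hlV : P.nodeSet l ⊆ V := by rwa [← P.image_toHyper hf, image_subset_iff]
  have hradius : Tendsto (fun m => radius (m :: l)) atTop (𝓝 0) :=
    squeeze_zero (fun m => (radius_pos _).le) (fun m => radius_le_pow_of_mem List.mem_cons_self)
      (tendsto_pow_atTop_nhds_zero_of_lt_one (by norm_num) (by norm_num))
  filter_upwards [eventually_thickening_subset_of_antitone (P.antitone_box_cons l)
    (fun m => (P.isClosed_box _).isCompact) hV ((P.core_subset_nodeSet l).trans hlV) hradius]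
    with m hm
  exact preimage_mono ((P.nodeSet_cons_subset m l).trans (union_subset hlV hm))

lemma exists_seq_nodeSet_approx {B : Hyper X} (hB : B ∈ closure (range (P.toHyper hf))) :
    ∃ g : ℕ → List ℕ, (∀ ε > 0, ∀ᶠ n in atTop, P.nodeSet (g n) ⊆ thickening ε (f '' B.1)) ∧
      ∀ ε > 0, ∀ᶠ n in atTop, f '' B.1 ⊆ thickening ε (P.nodeSet (g n)) := by
  have happrox : ∀ n : ℕ, ∃ l, P.nodeSet l ⊆ thickening (1 / (n + 1)) (f '' B.1) ∧
      f '' B.1 ⊆ thickening (1 / (n + 1)) (P.nodeSet l) := fun n => by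
    obtain ⟨_, hK, l, rfl⟩ := ((Hyper.eventually_image_subset_thickening hf.continuous B
      Nat.one_div_pos_of_nat).and_frequently (mem_closure_iff_frequently.1 hB)).exists
    exact ⟨l, P.image_toHyper hf l ▸ hK⟩
  choose g hg using happrox
  have hsmall : ∀ ε > 0, ∀ᶠ n : ℕ in atTop, 1 / ((n : ℝ) + 1) < ε :=
    fun ε hε => (tendsto_order.1 tendsto_one_div_add_atTop_nhds_zero_nat).2 ε hε
  exact ⟨g, fun ε hε => (hsmall ε hε).mono fun n hn => (hg n).1.trans (thickening_mono hn.le _),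
    fun ε hε => (hsmall ε hε).mono fun n hn => (hg n).2.trans (thickening_mono hn.le _)⟩

lemma isClosed_range_toHyper : IsClosed (range (P.toHyper hf)) := by
  refine isClosed_of_closure_subset fun B hB => ?_
  have hK : IsClosed (f '' B.1) := (B.2.1.image hf.continuous).isClosed
  obtain ⟨g, hup, hlow⟩ := P.exists_seq_nodeSet_approx hf hB
  rcases frequently_trichotomy g with ⟨l, hl⟩ | ⟨u, hu⟩ | ⟨b, hb⟩
  · refine ⟨l, P.toHyper_eq_of_image_eq hf ?_⟩
    exact (subset_of_frequently_subset' (P.isClosed_nodeSet l) hlow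
      (hl.mono fun n hn => by rw [hn])).antisymm
        (subset_of_frequently_subset hK hup (hl.mono fun n hn => by rw [hn]))
  · have hsuf : ∃ᶠ n in atTop, u <:+ g n :=
      (hu 0).mono fun n ⟨m, _, hm⟩ => (List.suffix_cons m u).trans hm
    refine ⟨u, P.toHyper_eq_of_image_eq hf ?_⟩
    exact (P.subset_nodeSet_of_frequently_cons_suffix hlow hu).antisymm
      (subset_of_frequently_subset hK hup (hsuf.mono fun n => P.nodeSet_subset_of_suffix))
  · exact (P.not_forall_frequently_branchNode_suffix hK (image_subset_range _ _) hup b hb).elim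

lemma perfect_range_toHyper : Perfect (range (P.toHyper hf)) := by
  refine ⟨P.isClosed_range_toHyper hf, ?_⟩
  rintro _ ⟨l, rfl⟩
  refine accPt_iff_frequently.2 ((P.tendsto_toHyper_cons hf l).frequently
    (Frequently.of_forall fun m => ⟨fun h => P.not_nodeSet_cons_subset m l ?_, m :: l, rfl⟩))
  rw [← P.image_toHyper hf, ← P.image_toHyper hf, h]

end NonMengerSystem

theorem menger_remainder_of_hyperspace_hereditarilyBaire_general {X : Type u}
    [TopologicalSpace X]
    (h : HereditarilyBaire (Hyper X)) :
    ∀ (Z : Type u) [TopologicalSpace Z] [CompactSpace Z]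
      [TopologicalSpace.MetrizableSpace Z] (f : X → Z),
      Topology.IsEmbedding f → Menger ↥(Set.range f)ᶜ := by
  intro Z _ _ _ f hf
  by_contra hM
  let _ : MetricSpace Z := TopologicalSpace.metrizableSpaceMetric Z
  have : T2Space X := hf.t2Space
  obtain ⟨P⟩ := NonMengerSystem.nonempty_of_not_menger hM
  exact (range_nonempty (P.toHyper hf)).ne_empty
    (HereditarilyBaire.eq_empty_of_perfect_of_countable h (P.perfect_range_toHyper hf)
      (countable_range _))

/-- If `X` is separable metrizable and its Vietoris hyperspace `K(X)` is
hereditarily Baire, then for every compact metrizable space `Z` containing `X`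
as a subspace, the remainder `Z \ X` is Menger. -/
theorem menger_remainder_of_hyperspace_hereditarilyBaire {X : Type u}
    [TopologicalSpace X] [TopologicalSpace.SeparableSpace X]
    [TopologicalSpace.MetrizableSpace X]
    (h : HereditarilyBaire (Hyper X)) :
    ∀ (Z : Type u) [TopologicalSpace Z] [CompactSpace Z]
      [TopologicalSpace.MetrizableSpace Z] (f : X → Z),
      Topology.IsEmbedding f → Menger ↥(Set.range f)ᶜ :=
  menger_remainder_of_hyperspace_hereditarilyBaire_general h
end

section
/- Every Tychonoff space X that is Menger at infinity is a Baire space. -/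
open Set Filter Topology

namespace Menger

variable {X : Type*} [TopologicalSpace X]

theorem exists_finite_subcovers {ι : Type*} (hX : Menger X) (U : ℕ → ι → Set X)
    (hUo : ∀ n i, IsOpen (U n i)) (hU : ∀ n, ⋃ i, U n i = univ) :
    ∃ t : ℕ → Set ι, (∀ n, (t n).Finite) ∧ ⋃ n, ⋃ i ∈ t n, U n i = univ := by
  obtain ⟨V, hV, hVcov⟩ := hX (fun n => range (U n))
    fun n => ⟨forall_mem_range.2 (hUo n), by rw [sUnion_range, hU n]⟩
  choose t _ ht htV using fun n => exists_subset_image_finite_and (p := (· = V n)).1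
    ⟨V n, by rw [image_univ]; exact (hV n).1, (hV n).2, rfl⟩
  refine ⟨t, ht, eq_univ_of_forall fun x => ?_⟩
  obtain ⟨v, hv, hxv⟩ := mem_sUnion.1 (hVcov.ge (mem_univ x))
  obtain ⟨n, hvn⟩ := mem_iUnion.1 hv
  rw [← htV n] at hvn
  obtain ⟨i, hi, rfl⟩ := hvn
  exact mem_iUnion.2 ⟨n, mem_biUnion hi hxv⟩

theorem lindelofSpace_s12 (hX : Menger X) : LindelofSpace X := by
  rw [← isLindelof_univ_iff, isLindelof_iff_countable_subcover]
  intro ι U hUo hcov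
  obtain ⟨t, ht, htcov⟩ :=
    hX.exists_finite_subcovers (fun _ => U) (fun _ => hUo) fun _ => univ_subset_iff.1 hcov
  refine ⟨⋃ n, t n, countable_iUnion fun n => (ht n).countable, fun x _ => ?_⟩
  obtain ⟨n, i, hi, hxi⟩ : ∃ n, ∃ i ∈ t n, x ∈ U i := by simpa using htcov.ge (mem_univ x)
  exact mem_biUnion (mem_iUnion.2 ⟨n, hi⟩) hxi

theorem exists_iUnion_eq_univ_of_monotone (hX : Menger X) {U : ℕ → ℕ → Set X}
    (hUo : ∀ n k, IsOpen (U n k)) (hmono : ∀ n, Monotone (U n)) (hU : ∀ n, ⋃ k, U n k = univ) :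
    ∃ k : ℕ → ℕ, ⋃ n, U n (k n) = univ := by
  obtain ⟨t, ht, htcov⟩ := hX.exists_finite_subcovers U hUo hU
  choose k hk using fun n => (ht n).bddAbove
  refine ⟨k, eq_univ_of_forall fun x => ?_⟩
  obtain ⟨n, i, hi, hxi⟩ : ∃ n, ∃ i ∈ t n, x ∈ U n i := by simpa using htcov.ge (mem_univ x)
  exact mem_iUnion.2 ⟨n, hmono n (hk n hi) hxi⟩

end Menger

/-- A node `s : List ℕ` records its path from the root in reverse order. -/
def recTree {α : Type*} (root : α) (child : α → ℕ → ℕ → α) : List ℕ → α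
  | [] => root
  | k :: s => child (recTree root child s) s.length k

def branchPrefix (b : ℕ → ℕ) : ℕ → List ℕ
  | 0 => []
  | n + 1 => b n :: branchPrefix b n

theorem length_branchPrefix (b : ℕ → ℕ) (n : ℕ) : (branchPrefix b n).length = n := by
  induction n with
  | zero => rfl
  | succ n ih => simp [branchPrefix, ih]

def childrenBeyond {α : Type*} (T : List ℕ → Set α) (n k : ℕ) : Set α :=
  ⋃ (s : List ℕ) (_ : s.length = n) (j : ℕ) (_ : k < j), T (j :: s)

theorem subset_childrenBeyond {α : Type*} (T : List ℕ → Set α) {s : List ℕ} {j k : ℕ}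
    (hkj : k < j) : T (j :: s) ⊆ childrenBeyond T s.length k :=
  subset_iUnion₂_of_subset s rfl (subset_iUnion₂_of_subset j hkj subset_rfl)

theorem childrenBeyond_antitone {α : Type*} (T : List ℕ → Set α) (n : ℕ) :
    Antitone (childrenBeyond T n) := fun _ _ hkl =>
  iUnion₂_mono fun _ _ => biUnion_mono (fun _ hlj => hkl.trans_lt hlj) fun _ _ => subset_rfl

section Topology

variable {Z : Type*} [TopologicalSpace Z]

theorem IsLindelof.exists_seq_isOpen_notMem_closure [T25Space Z]
    {Y : Set Z} (hY : IsLindelof Y) {x : Z} (hx : x ∉ Y) :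
    ∃ H : ℕ → Set Z, (∀ n, IsOpen (H n)) ∧ (∀ n, x ∉ closure (H n)) ∧ Y ⊆ ⋃ n, H n := by
  have hcov : Y ⊆ ⋃ H : {H : Set Z // IsOpen H ∧ x ∉ closure H}, H.1 := fun y hy => by
    obtain ⟨u, hyu, huo, v, hxv, -, huv⟩ :=
      exists_open_nhds_disjoint_closure (ne_of_mem_of_not_mem hy hx)
    exact mem_iUnion.2 ⟨⟨u, huo, fun hxu => huv.ne_of_mem hxu (subset_closure hxv) rfl⟩, hyu⟩
  have : Nonempty {H : Set Z // IsOpen H ∧ x ∉ closure H} := ⟨⟨∅, isOpen_empty, by simp⟩⟩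
  obtain ⟨f, hf⟩ := hY.indexed_countable_subcover _ (fun H => H.2.1) hcov
  exact ⟨fun n => (f n).1, fun n => (f n).2.1, fun n => (f n).2.2, hf⟩

theorem exists_seq_closure_subset_of_isLindelof [T3Space Z] {Y : Set Z} (hY : IsLindelof Y)
    (hYc : Dense Yᶜ) {R V : Set Z} (hR : IsOpen R) (hRne : R.Nonempty) (hV : IsOpen V)
    (hVd : Dense V) :
    ∃ Q : ℕ → Set Z, (∀ k, IsOpen (Q k) ∧ (Q k).Nonempty ∧ closure (Q k) ⊆ R ∩ V) ∧
      ∀ y ∈ Y, ∃ N ∈ 𝓝 y, {k | (Q k ∩ N).Nonempty}.Finite := by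
  obtain ⟨x, hxR, hxY⟩ := hYc.inter_open_nonempty R hR hRne
  obtain ⟨H, hHo, hxH, hYH⟩ := hY.exists_seq_isOpen_notMem_closure hxY
  -- `Q k ⊆ G k` misses `H i` for `i < k`, which makes `Q` locally finite at the points of `Y`.
  set G : ℕ → Set Z := fun k => R ∩ ⋂ i ∈ Finset.range k, (closure (H i))ᶜ
  have hGo : ∀ k, IsOpen (G k) := fun k =>
    hR.inter (isOpen_biInter_finset fun i _ => isClosed_closure.isOpen_compl)
  have hQ : ∀ k, ∃ Q, (IsOpen Q ∧ Q.Nonempty) ∧ closure Q ⊆ G k ∩ V := fun k => by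
    obtain ⟨p, hp⟩ := hVd.inter_open_nonempty (G k) (hGo k)
      ⟨x, hxR, mem_iInter₂.2 fun i _ => hxH i⟩
    obtain ⟨Q, ⟨hpQ, hQo⟩, hQ⟩ :=
      (hasBasis_opens_closure p).mem_iff.1 (((hGo k).inter hV).mem_nhds hp)
    exact ⟨Q, ⟨hQo, p, hpQ⟩, hQ⟩
  choose Q hQ hQG using hQ
  have hQRV : ∀ k, closure (Q k) ⊆ R ∩ V := fun k =>
    (hQG k).trans (inter_subset_inter_left _ inter_subset_left)
  refine ⟨Q, fun k => ⟨(hQ k).1, (hQ k).2, hQRV k⟩, fun y hy => ?_⟩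
  obtain ⟨i, hyi⟩ := mem_iUnion.1 (hYH hy)
  refine ⟨H i, (hHo i).mem_nhds hyi, (finite_le_nat i).subset fun k ⟨z, hzQ, hzH⟩ => ?_⟩
  by_contra hik
  have hzG : z ∈ G k := (hQG k (subset_closure hzQ)).1
  exact mem_iInter₂.1 hzG.2 i (Finset.mem_range.2 (not_le.1 hik)) (subset_closure hzH)

theorem exists_nhds_finite_level {T : List ℕ → Set Z} {y : Z} (hT : ∀ k s, T (k :: s) ⊆ T s)
    (hchild : ∀ s, ∃ N ∈ 𝓝 y, {k | (T (k :: s) ∩ N).Nonempty}.Finite) (n : ℕ) :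
    ∃ N ∈ 𝓝 y, {s : List ℕ | s.length = n ∧ (T s ∩ N).Nonempty}.Finite := by
  induction n with
  | zero =>
    refine ⟨univ, univ_mem, (finite_singleton []).subset fun s hs => ?_⟩
    exact List.length_eq_zero_iff.1 hs.1
  | succ n ih =>
    obtain ⟨N, hN, hfin⟩ := ih
    choose M hM hMfin using hchild
    set S := {s : List ℕ | s.length = n ∧ (T s ∩ N).Nonempty}
    refine ⟨N ∩ ⋂ s ∈ S, M s, inter_mem hN ((biInter_mem hfin).2 fun s _ => hM s),
      (hfin.biUnion fun s _ => (hMfin s).image (· :: s)).subset ?_⟩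
    rintro (_ | ⟨k, s⟩) ⟨hlen, z, hzT, hzN, hzM⟩
    · simp at hlen
    · have hs : s ∈ S := ⟨by simpa using hlen, z, hT k s hzT, hzN⟩
      exact mem_biUnion hs ⟨k, ⟨z, hzT, mem_iInter₂.1 hzM s hs⟩, rfl⟩

theorem exists_notMem_closure_childrenBeyond {T : List ℕ → Set Z} {y : Z} {n : ℕ}
    (h : ∃ N ∈ 𝓝 y, {s : List ℕ | s.length = n + 1 ∧ (T s ∩ N).Nonempty}.Finite) :
    ∃ k, y ∉ closure (childrenBeyond T n k) := by
  obtain ⟨N, hN, hfin⟩ := h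
  obtain ⟨k, hk⟩ := (hfin.image (List.headD · 0)).bddAbove
  refine ⟨k, fun hy => ?_⟩
  obtain ⟨z, hzN, hz⟩ := mem_closure_iff_nhds.1 hy N hN
  obtain ⟨s, hs, j, hkj, hzT⟩ : ∃ s, s.length = n ∧ ∃ j, k < j ∧ z ∈ T (j :: s) := by
    simpa [childrenBeyond] using hz
  have : j ≤ k := hk ⟨j :: s, ⟨by simp [hs], z, hzT, hzN⟩, rfl⟩
  omega

theorem exists_mem_closure_branchPrefix [CompactSpace Z] {T : List ℕ → Set Z}
    {V : ℕ → Set Z} (hT : ∀ k s, closure (T (k :: s)) ⊆ T s ∩ V s.length)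
    (hne : ∀ s, (T s).Nonempty) (b : ℕ → ℕ) :
    ∃ w ∈ T [] ∩ ⋂ n, V n, ∀ n, w ∈ closure (T (branchPrefix b n)) := by
  have hsucc : ∀ n, closure (T (branchPrefix b (n + 1))) ⊆ T (branchPrefix b n) ∩ V n :=
    fun n => by
      have := hT (b n) (branchPrefix b n)
      rwa [length_branchPrefix] at this
  obtain ⟨w, hw⟩ := IsCompact.nonempty_iInter_of_sequence_nonempty_isCompact_isClosed
    (fun n => closure (T (branchPrefix b n)))
    (fun n => (hsucc n).trans (inter_subset_left.trans subset_closure))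
    (fun n => (hne _).closure) isClosed_closure.isCompact fun _ => isClosed_closure
  rw [mem_iInter] at hw
  exact ⟨w, ⟨(hsucc 0 (hw 1)).1, mem_iInter.2 fun n => (hsucc n (hw (n + 1))).2⟩, hw⟩

theorem baireSpace_of_dense_inter_iInter {X : Set Z}
    (hX : Dense X) (h : ∀ V : ℕ → Set Z, (∀ n, IsOpen (V n)) → (∀ n, Dense (V n)) →
      Dense (X ∩ ⋂ n, V n)) : BaireSpace X := by
  refine ⟨fun U hUo hUd => ?_⟩
  choose V hVo hVd hVU using fun n =>
    exists_open_dense_of_open_dense_subtype hX (hUo n) (hUd n)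
  have hU : ⋂ n, U n = (↑) ⁻¹' ⋂ n, V n := by simp only [preimage_iInter, hVU]
  rw [hU, Subtype.dense_iff, Subtype.image_preimage_coe, (h V hVo hVd).closure_eq]
  exact subset_univ X

theorem dense_inter_iInter_of_menger_compl [CompactSpace Z] [T2Space Z] {X : Set Z}
    (hX : Dense X) (hM : Menger ↥Xᶜ) {V : ℕ → Set Z}
    (hVo : ∀ n, IsOpen (V n)) (hVd : ∀ n, Dense (V n)) : Dense (X ∩ ⋂ n, V n) := by
  rw [dense_iff_inter_open]
  intro W hWo hWne
  have hY : IsLindelof Xᶜ := isLindelof_iff_lindelofSpace.2 hM.lindelofSpace_s12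
  choose Q hQ hQfin using fun (R : {R : Set Z // IsOpen R ∧ R.Nonempty}) n =>
    exists_seq_closure_subset_of_isLindelof hY (by rwa [compl_compl]) R.2.1 R.2.2 (hVo n) (hVd n)
  let tree : List ℕ → {R : Set Z // IsOpen R ∧ R.Nonempty} :=
    recTree ⟨W, hWo, hWne⟩ fun R n k => ⟨Q R n k, (hQ R n k).1, (hQ R n k).2.1⟩
  let T s := (tree s).1
  have hT : ∀ k s, closure (T (k :: s)) ⊆ T s ∩ V s.length := fun k s => (hQ _ _ k).2.2
  have hTsub : ∀ k s, T (k :: s) ⊆ T s := fun k s =>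
    subset_closure.trans ((hT k s).trans inter_subset_left)
  have hcov : ∀ n, ⋃ k, ((↑) ⁻¹' (closure (childrenBeyond T n k))ᶜ : Set ↥Xᶜ) = univ := fun n =>
    eq_univ_of_forall fun y => mem_iUnion.2 <| exists_notMem_closure_childrenBeyond <|
      exists_nhds_finite_level hTsub (fun s => hQfin _ _ y y.2) (n + 1)
  obtain ⟨k, hk⟩ := hM.exists_iUnion_eq_univ_of_monotone
    (fun n k => isClosed_closure.isOpen_compl.preimage continuous_subtype_val)
    (fun n _ _ hkl => preimage_mono <| compl_subset_compl.2 <|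
      closure_mono (childrenBeyond_antitone T n hkl)) hcov
  obtain ⟨w, ⟨hwW, hwV⟩, hw⟩ := exists_mem_closure_branchPrefix hT (fun s => (tree s).2.2)
    (fun n => k n + 1)
  refine ⟨w, hwW, ?_, hwV⟩
  by_contra hwX
  obtain ⟨n, hn⟩ := mem_iUnion.1 (hk.ge (mem_univ ⟨w, hwX⟩))
  have := closure_mono (subset_childrenBeyond T (Nat.lt_succ_self (k n))) (hw (n + 1))
  exact hn (by rwa [length_branchPrefix] at this)

end Topology

theorem baire_of_menger_at_infinity_general {X : Type u} [TopologicalSpace X]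
    (h : ∃ (Z : Type u) (_ : TopologicalSpace Z),
      CompactSpace Z ∧ T2Space Z ∧
      ∃ f : X → Z, Topology.IsEmbedding f ∧ DenseRange f ∧
        Menger ↥(Set.range f)ᶜ) :
    BaireSpace X := by
  obtain ⟨Z, _, _, _, f, hf, hfd, hM⟩ := h
  have : BaireSpace (range f) := baireSpace_of_dense_inter_iInter hfd
    fun _ hVo hVd => dense_inter_iInter_of_menger_compl hfd hM hVo hVd
  exact hf.toHomeomorph.symm.baireSpace

/-- Every Tychonoff space which is Menger at infinity (some compactification
has Menger remainder) is a Baire space. -/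
theorem baire_of_menger_at_infinity {X : Type u} [TopologicalSpace X]
    [T35Space X]
    (h : ∃ (Z : Type u) (_ : TopologicalSpace Z),
      CompactSpace Z ∧ T2Space Z ∧
      ∃ f : X → Z, Topology.IsEmbedding f ∧ DenseRange f ∧
        Menger ↥(Set.range f)ᶜ) :
    BaireSpace X :=
  baire_of_menger_at_infinity_general h
end

section
/- Let ℱ be a free filter on ℕ, viewed as a subspace of the Cantor set 2^ℕ. If ℱ is a strong P-filter, then the complement 2^ℕ∖ℱ is a Menger space. -/
/-- The Cantor set `2^ℕ`. -/
def Cantor : Type := ℕ → Bool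

instance : TopologicalSpace Cantor := inferInstanceAs (TopologicalSpace (ℕ → Bool))

/-- The subset of `ℕ` coded by an element of the Cantor set. -/
def toSet (A : Cantor) : Set ℕ := {n | A n = true}

/-- `F ⊆ 2^ℕ` is a free filter on `ℕ`: it does not contain the empty set,
contains `ℕ`, is upward closed, closed under intersections, and contains all
cofinite sets. -/
structure IsFreeFilter (F : Set Cantor) : Prop where
  not_empty : ∀ A ∈ F, (toSet A).Nonempty
  univ_mem : (fun _ : ℕ => true) ∈ F
  superset : ∀ A ∈ F, ∀ B : Cantor, toSet A ⊆ toSet B → B ∈ F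
  inter : ∀ A ∈ F, ∀ B ∈ F, ∀ C : Cantor, toSet C = toSet A ∩ toSet B → C ∈ F
  cofinite : ∀ A : Cantor, (toSet A)ᶜ.Finite → A ∈ F

/-- `F` is a strong `P`-filter: for every sequence `(𝒞ₙ)` of compact subsets of
`F` there are naturals `0 = k₀ < k₁ < …` such that
`⋃ₙ (Xₙ ∩ [kₙ, kₙ₊₁)) ∈ F` whenever `Xₙ ∈ 𝒞ₙ` for each `n`. -/
def StrongPFilter (F : Set Cantor) : Prop :=
  ∀ C : ℕ → Set Cantor, (∀ n, IsCompact (C n) ∧ C n ⊆ F) →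
    ∃ k : ℕ → ℕ, k 0 = 0 ∧ StrictMono k ∧
      ∀ X : ℕ → Cantor, (∀ n, X n ∈ C n) →
        ∀ Y : Cantor,
          toSet Y = ⋃ n, (toSet (X n) ∩ Set.Ico (k n) (k (n + 1))) → Y ∈ F

/-- `F` is a `P`-filter: every decreasing sequence of members of `F` has a
pseudo-intersection in `F`. -/
def PFilter (F : Set Cantor) : Prop :=
  ∀ A : ℕ → Cantor, (∀ n, A n ∈ F) →
    (∀ n, toSet (A (n + 1)) ⊆ toSet (A n)) →
    ∃ B ∈ F, ∀ n, (toSet B \ toSet (A n)).Finite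

/-!
Menger-ness of a subspace `S` follows once every sequence of open supersets `Wₙ ⊇ S` contains
compact sets `Kₙ ⊆ Wₙ` covering `S`: finitely many members of the `n`-th cover already cover
`Kₙ`. For `S = Fᶜ` the complements `Wₙᶜ` are compact subsets of `F`, so the strong `P`-property
yields intervals `Iₙ = [kₙ, kₙ₊₁)`; let `Kₙ` be the clopen set of points whose whole
`Iₙ`-cylinder lies in `Wₙ`. A point `A ∉ F` outside every `Kₙ` agrees on each `Iₙ` with some
`Xₙ ∉ Wₙ`, and gluing the `Xₙ` along the intervals gives back `A`, forcing `A ∈ F`.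
-/

instance : CompactSpace Cantor := inferInstanceAs (CompactSpace (ℕ → Bool))

theorem iUnion_Ico_eq_univ_of_strictMono {k : ℕ → ℕ} (hk0 : k 0 = 0) (hk : StrictMono k) :
    ⋃ n, Set.Ico (k n) (k (n + 1)) = Set.univ := by
  simpa [hk0] using iUnion_Ico_map_succ_eq_Ici (f := k) (fun n => hk.monotone (Nat.zero_le n))
    hk.not_bddAbove_range_of_wellFoundedLT

theorem toSet_eq_iUnion_of_eqOn {k : ℕ → ℕ} (hk0 : k 0 = 0) (hk : StrictMono k)
    {X : ℕ → Cantor} {A : Cantor} (hXA : ∀ n, Set.EqOn (X n) A (Set.Ico (k n) (k (n + 1)))) :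
    toSet A = ⋃ n, (toSet (X n) ∩ Set.Ico (k n) (k (n + 1))) := by
  ext m
  obtain ⟨n, hm⟩ := Set.mem_iUnion.mp (iUnion_Ico_eq_univ_of_strictMono hk0 hk ▸ Set.mem_univ m)
  constructor
  · intro hA
    exact Set.mem_iUnion.mpr ⟨n, (hXA n hm).trans hA, hm⟩
  · rintro ⟨-, ⟨j, rfl⟩, hXm, hj⟩
    exact (hXA j hj).symm.trans hXm

theorem isClosed_setOf_eqOn_imp_mem {ι β : Type*} [TopologicalSpace β] [DiscreteTopology β]
    {I : Set ι} (hI : I.Finite) (W : Set (ι → β)) :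
    IsClosed {x : ι → β | ∀ y, Set.EqOn y x I → y ∈ W} := by
  have : Finite I := hI
  convert (isClosed_discrete {t : I → β | ∀ y, I.domRestrict y = t → y ∈ W}).preimage
    (Pi.continuous_domRestrict (A := fun _ => β) I)
  simp [Set.domRestrict_eq_domRestrict_iff]

theorem menger_of_forall_exists_isCompact {X : Type*} [TopologicalSpace X] (S : Set X)
    (hS : ∀ W : ℕ → Set X, (∀ n, IsOpen (W n) ∧ S ⊆ W n) →
      ∃ K : ℕ → Set X, (∀ n, IsCompact (K n) ∧ K n ⊆ W n) ∧ S ⊆ ⋃ n, K n) :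
    Menger S := by
  intro U hU
  have hlift : ∀ n (u : Set S), ∃ v : Set X, IsOpen v ∧ (u ∈ U n → Subtype.val ⁻¹' v = u) := by
    intro n u
    by_cases hu : u ∈ U n
    · obtain ⟨v, hv, hvu⟩ := isOpen_induced_iff.mp ((hU n).1 u hu)
      exact ⟨v, hv, fun _ => hvu⟩
    · exact ⟨∅, isOpen_empty, hu.elim⟩
  choose w hw_open hw_pre using hlift
  have hSW : ∀ n, S ⊆ ⋃ u ∈ U n, w n u := by
    intro n x hx
    obtain ⟨u, hu, hxu⟩ := Set.mem_sUnion.mp ((hU n).2 ▸ Set.mem_univ (⟨x, hx⟩ : S))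
    rw [← hw_pre n u hu] at hxu
    exact Set.mem_biUnion hu hxu
  obtain ⟨K, hK, hSK⟩ := hS (fun n => ⋃ u ∈ U n, w n u)
    fun n => ⟨isOpen_biUnion fun u _ => hw_open n u, hSW n⟩
  choose V hVU hV_fin hKV using fun n =>
    (hK n).1.elim_finite_subcover_image (fun u _ => hw_open n u) (hK n).2
  refine ⟨V, fun n => ⟨hVU n, hV_fin n⟩, Set.eq_univ_of_forall fun x => ?_⟩
  obtain ⟨n, hxK⟩ := Set.mem_iUnion.mp (hSK x.2)
  obtain ⟨u, hu, hxu⟩ := Set.mem_iUnion₂.mp (hKV n hxK)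
  refine ⟨u, Set.mem_iUnion.mpr ⟨n, hu⟩, ?_⟩
  rw [← hw_pre n u (hVU n hu)]
  exact hxu

theorem StrongPFilter.exists_isCompact_cover_compl {F : Set Cantor} (hF : StrongPFilter F)
    (W : ℕ → Set Cantor) (hW : ∀ n, IsOpen (W n) ∧ Fᶜ ⊆ W n) :
    ∃ K : ℕ → Set Cantor, (∀ n, IsCompact (K n) ∧ K n ⊆ W n) ∧ Fᶜ ⊆ ⋃ n, K n := by
  obtain ⟨k, hk0, hk, hglue⟩ := hF (fun n => (W n)ᶜ)
    fun n => ⟨(hW n).1.isClosed_compl.isCompact, Set.compl_subset_comm.mp (hW n).2⟩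
  refine ⟨fun n => {x | ∀ y, Set.EqOn y x (Set.Ico (k n) (k (n + 1))) → y ∈ W n},
    fun n => ⟨(isClosed_setOf_eqOn_imp_mem (Set.finite_Ico _ _) (W n)).isCompact,
      fun x hx => hx x (Set.eqOn_refl _ _)⟩, ?_⟩
  intro A hA
  by_contra hAK
  simp only [Set.mem_iUnion, Set.mem_ofPred_eq, not_exists, not_forall] at hAK
  choose X hXA hXW using hAK
  exact hA (hglue X hXW A (toSet_eq_iUnion_of_eqOn hk0 hk hXA))

theorem menger_compl_of_strongPFilter_general (F : Set Cantor)
    (h : StrongPFilter F) : Menger ↥Fᶜ :=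
  menger_of_forall_exists_isCompact Fᶜ h.exists_isCompact_cover_compl

/-- If a free filter `F` on `ℕ`, viewed as a subspace of the Cantor set `2^ℕ`,
is a strong `P`-filter, then its complement `2^ℕ \ F` is Menger. -/
theorem menger_compl_of_strongPFilter (F : Set Cantor) (hF : IsFreeFilter F)
    (h : StrongPFilter F) : Menger ↥Fᶜ :=
  menger_compl_of_strongPFilter_general F h
end

section
/- Let ℱ be a free filter on ℕ, viewed as a subspace of the Cantor set 2^ℕ. If the hyperspace K(ℱ) with the Vietoris topology is hereditarily Baire, then ℱ is a strong P-filter. -/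
/-!
Code a partition of `ℕ` into consecutive blocks by `R ∈ 2^ℕ`, the set of block starts other
than `0`, and let `L(R) ∈ K(2^ℕ)` be the set of all `⋃ₙ (Xₙ ∩ Bₙ)` with `Xₙ ∈ 𝒞ₙ`, where `Bₙ` is
the `n`-th block. Then `L` is continuous on the compact space `2^ℕ`, and `L(R) ⊆ ℱ` for finite `R`
since the last block is cofinite. It suffices to find an infinite `R` with `L(R) ⊆ ℱ`; suppose
there is none. The countably many points `L(R)`, `R` finite, of `K(ℱ)` have a closure `D` which is
Baire. None of them is isolated in `D`: otherwise `L` would be constant near such an `R`, hence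
equal to `L(R) ⊆ ℱ` at an infinite code. So some `x ∈ D` is not of this form, yet `x` lies in the
closed set `L(2^ℕ)`, so `x = L(R)` with `R` infinite and `L(R) = x ⊆ ℱ`.
-/

open Set Filter Topology TopologicalSpace

instance : T2Space Cantor := inferInstanceAs (T2Space (ℕ → Bool))

instance inst_s15 : CompactSpace Cantor := inferInstanceAs (CompactSpace (ℕ → Bool))

lemma toSet_injective : Function.Injective toSet := fun _ _ h =>
  funext fun n => Bool.eq_iff_iff.2 (Set.ext_iff.1 h n)

open scoped Classical in
lemma toSet_surjective : Function.Surjective toSet := fun S =>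
  ⟨fun n => decide (n ∈ S), by ext; simp [toSet]⟩

namespace Cantor

lemma tendsto_of_forall_eventually_eq {s : ℕ → Cantor} {A : Cantor}
    (h : ∀ n, ∀ᶠ B in atTop, s B n = A n) : Tendsto s atTop (𝓝 A) :=
  tendsto_pi_nhds.2 fun n => tendsto_nhds_of_eventually_eq (h n)

lemma countable_setOf_finite : {A : Cantor | (toSet A).Finite}.Countable := by
  refine (countable_range fun s : Finset ℕ => (fun n => decide (n ∈ s) : Cantor)).mono ?_
  intro A hA
  refine ⟨hA.toFinset, funext fun n => ?_⟩
  simp [toSet]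

lemma dense_setOf_finite : Dense {A : Cantor | (toSet A).Finite} := by
  intro A
  refine mem_closure_of_tendsto
    (tendsto_of_forall_eventually_eq (s := fun B n => A n && decide (n < B)) fun n => ?_)
    (Eventually.of_forall fun B => (finite_Iio B).subset ?_)
  · filter_upwards [eventually_gt_atTop n] with B hB
    simp [hB]
  · intro n hn
    simp_all [toSet]

lemma dense_setOf_infinite : Dense {A : Cantor | (toSet A).Infinite} := by
  intro A
  refine mem_closure_of_tendsto
    (tendsto_of_forall_eventually_eq (s := fun B n => A n || decide (B ≤ n)) fun n => ?_)
    (Eventually.of_forall fun B => (Ici_infinite B).mono ?_)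
  · filter_upwards [eventually_gt_atTop n] with B hB
    simp [hB]
  · intro n hn
    simp_all [toSet]

end Cantor

lemma IsFreeFilter.mem_of_finite_diff {F : Set Cantor} (hF : IsFreeFilter F) {A B : Cantor}
    (hA : A ∈ F) (hAB : (toSet A \ toSet B).Finite) : B ∈ F := by
  obtain ⟨D, hD⟩ := toSet_surjective (toSet A \ toSet B)ᶜ
  obtain ⟨E, hE⟩ := toSet_surjective (toSet A ∩ toSet D)
  have hDF : D ∈ F := hF.cofinite D (by rwa [hD, compl_compl])
  refine hF.superset E (hF.inter A hA D hDF E hE) B ?_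
  rw [hE, hD]
  rintro n ⟨hnA, hn⟩
  by_contra hnB
  exact hn ⟨hnA, hnB⟩

namespace TopologicalSpace.NonemptyCompacts

variable {ι : Type*} {X : ι → Type*} [∀ i, TopologicalSpace (X i)]

protected def pi (K : ∀ i, NonemptyCompacts (X i)) : NonemptyCompacts (∀ i, X i) :=
  ⟨⟨univ.pi fun i => (K i : Set (X i)), isCompact_univ_pi fun i => (K i).isCompact⟩,
    univ_pi_nonempty_iff.2 fun i => (K i).nonempty⟩

end TopologicalSpace.NonemptyCompacts

namespace Hyper

variable (X : Type*) [TopologicalSpace X]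

def homeomorphNonemptyCompacts : Hyper X ≃ₜ NonemptyCompacts X where
  toFun K := ⟨⟨K.1, K.2.1⟩, K.2.2⟩
  invFun K := ⟨K, K.isCompact, K.nonempty⟩
  left_inv _ := rfl
  right_inv _ := rfl
  continuous_toFun := by
    let := TopologicalSpace.vietoris X
    refine NonemptyCompacts.isEmbedding_coe.continuous_iff.2 (continuous_generateFrom_iff.2 ?_)
    rintro _ (⟨U, hU, rfl⟩ | ⟨U, hU, rfl⟩)
    · exact isOpen_generateFrom_of_mem (Or.inl ⟨U, hU, rfl⟩)
    · exact isOpen_generateFrom_of_mem (Or.inr ⟨U, hU, rfl⟩)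
  continuous_invFun := by
    refine continuous_generateFrom_iff.2 ?_
    rintro _ (⟨U, hU, rfl⟩ | ⟨U, hU, rfl⟩)
    · exact NonemptyCompacts.isOpen_subsets_of_isOpen hU
    · exact NonemptyCompacts.isOpen_inter_nonempty_of_isOpen hU

instance [T2Space X] : T2Space (Hyper X) :=
  (homeomorphNonemptyCompacts X).isEmbedding.t2Space

variable {X}

def imageVal (s : Set X) : Hyper s → NonemptyCompacts X :=
  NonemptyCompacts.map Subtype.val continuous_subtype_val ∘ homeomorphNonemptyCompacts s

lemma isEmbedding_imageVal (s : Set X) : IsEmbedding (imageVal s) :=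
  IsEmbedding.subtypeVal.nonemptyCompacts_map.comp (homeomorphNonemptyCompacts s).isEmbedding

lemma range_imageVal (s : Set X) : range (imageVal s) = {K : NonemptyCompacts X | ↑K ⊆ s} := by
  rw [imageVal, range_comp, (homeomorphNonemptyCompacts s).range_coe, image_univ,
    NonemptyCompacts.range_map IsEmbedding.subtypeVal.isInducing, Subtype.range_coe]

lemma coe_imageVal_subset {s : Set X} (K : Hyper s) : (imageVal s K : Set X) ⊆ s :=
  (range_imageVal s).subset (mem_range_self K)

end Hyper

lemma exists_notMem_of_countable {X : Type*} [TopologicalSpace X] [BaireSpace X] [T1Space X]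
    [Nonempty X] {S : Set X} (hS : S.Countable) (hiso : ∀ x ∈ S, ¬IsOpen ({x} : Set X)) :
    ∃ y, y ∉ S := by
  obtain ⟨y, hy⟩ := (dense_biInter_of_isOpen (fun x _ => isOpen_compl_singleton) hS
    fun x hx => dense_compl_singleton_iff_not_open.2 (hiso x hx)).nonempty
  exact ⟨y, fun hyS => mem_iInter₂.1 hy y hyS rfl⟩

/-- Blocks start at `0` and at every `m ∈ toSet R` (so `R 0` is irrelevant); `n` lies in the
block numbered `blockIndex R n`. -/
def blockIndex (R : Cantor) (n : ℕ) : ℕ := Nat.count (fun m => R (m + 1) = true) n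

noncomputable def blockStart (R : Cantor) : ℕ → ℕ := Nat.nth (· ∈ insert 0 (toSet R))

def blockSelect (R : Cantor) (X : ℕ → Cantor) : Cantor := fun n => X (blockIndex R n) n

lemma blockStart_zero (R : Cantor) : blockStart R 0 = 0 :=
  Nat.nth_zero_of_zero (mem_insert 0 _)

lemma strictMono_blockStart {R : Cantor} (hR : (toSet R).Infinite) : StrictMono (blockStart R) :=
  Nat.nth_strictMono (hR.mono (subset_insert 0 _))

open scoped Classical in
lemma count_insert_zero_succ (R : Cantor) (n : ℕ) :
    Nat.count (· ∈ insert 0 (toSet R)) (n + 1) = blockIndex R n + 1 := by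
  simp [Nat.count_succ', blockIndex, toSet]

open scoped Classical in
lemma blockIndex_eq_iff {R : Cantor} (hR : (toSet R).Infinite) {n j : ℕ} :
    blockIndex R n = j ↔ n ∈ Ico (blockStart R j) (blockStart R (j + 1)) := by
  have hinf : (Set.ofPred (· ∈ insert 0 (toSet R))).Infinite := hR.mono (subset_insert _ _)
  have h₁ := Nat.count_le_iff_le_nth hinf (a := n + 1) (b := j)
  have h₂ := Nat.count_le_iff_le_nth hinf (a := n + 1) (b := j + 1)
  rw [count_insert_zero_succ] at h₁ h₂
  simp only [mem_Ico, blockStart]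
  omega

lemma toSet_blockSelect {R : Cantor} (hR : (toSet R).Infinite) (X : ℕ → Cantor) :
    toSet (blockSelect R X) = ⋃ j, toSet (X j) ∩ Ico (blockStart R j) (blockStart R (j + 1)) := by
  ext n
  simp only [mem_iUnion, mem_inter_iff, ← blockIndex_eq_iff hR, exists_eq_right']
  rfl

lemma blockIndex_eventually_const {R : Cantor} (hR : (toSet R).Finite) :
    ∃ N, ∀ n ≥ N, blockIndex R n = blockIndex R N := by
  obtain ⟨N, hN⟩ := hR.bddAbove
  refine ⟨N, fun n hn => ?_⟩
  obtain ⟨d, rfl⟩ := Nat.exists_eq_add_of_le hn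
  simp only [blockIndex, Nat.count_add, add_eq_left, Nat.count_iff_forall_not]
  intro m _ hm
  have := hN hm
  omega

lemma continuous_blockIndex (n : ℕ) : Continuous fun R => blockIndex R n := by
  refine IsLocallyConstant.continuous ((IsLocallyConstant.iff_eventually_eq _).2 fun R => ?_)
  have hnear : ∀ᶠ R' in 𝓝 R, ∀ m ∈ Finset.range n, R' (m + 1) = R (m + 1) :=
    (Finset.eventually_all _).2 fun m _ =>
      (continuous_apply (m + 1)).continuousAt.eventually_mem
        ((isOpen_discrete {R (m + 1)}).mem_nhds rfl)
  filter_upwards [hnear] with R' hR'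
  simp only [blockIndex, Nat.count_eq_card_filter_range]
  exact congrArg Finset.card (Finset.filter_congr fun m hm => by rw [hR' m hm])

lemma continuous_blockSelect : Continuous (Function.uncurry blockSelect) := by
  refine continuous_pi fun n => ?_
  have hsel : Continuous fun p : ℕ × (ℕ → Cantor) => p.2 p.1 n :=
    continuous_prod_of_discrete_left.2 fun j => (continuous_apply n).comp (continuous_apply j)
  exact hsel.comp (((continuous_blockIndex n).comp continuous_fst).prodMk continuous_snd)

section BlockUnions

variable (K : ℕ → NonemptyCompacts Cantor)

def blockUnions (R : Cantor) : NonemptyCompacts Cantor :=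
  (NonemptyCompacts.pi K).map (blockSelect R) (continuous_blockSelect.comp (.prodMk_right R))

lemma continuous_blockUnions : Continuous (blockUnions K) :=
  continuous_const.nonemptyCompacts_map' continuous_blockSelect

variable {K}

lemma blockSelect_mem_blockUnions (R : Cantor) {X : ℕ → Cantor} (hX : ∀ n, X n ∈ K n) :
    blockSelect R X ∈ blockUnions K R :=
  ⟨X, fun n _ => hX n, rfl⟩

lemma blockUnions_subset_of_finite {F : Set Cantor} (hF : IsFreeFilter F)
    (hKF : ∀ n, (K n : Set Cantor) ⊆ F) {R : Cantor} (hR : (toSet R).Finite) :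
    (blockUnions K R : Set Cantor) ⊆ F := by
  rintro _ ⟨X, hX, rfl⟩
  obtain ⟨N, hN⟩ := blockIndex_eventually_const hR
  refine hF.mem_of_finite_diff (hKF _ (hX (blockIndex R N) trivial)) ((finite_Iio N).subset ?_)
  rintro n ⟨hXn, hYn⟩
  by_contra hNn
  exact hYn (by rwa [toSet, mem_ofPred_eq, blockSelect, hN n (not_lt.1 hNn)])

end BlockUnions

section Nodes

variable {F : Set Cantor} {K : ℕ → NonemptyCompacts Cantor}

variable (F K) in
def nodes : Set (Hyper F) := Hyper.imageVal F ⁻¹' (blockUnions K '' {R | (toSet R).Finite})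

lemma countable_nodes : (nodes F K).Countable :=
  (Cantor.countable_setOf_finite.image _).preimage (Hyper.isEmbedding_imageVal F).injective

lemma exists_mem_nodes (hF : IsFreeFilter F) (hKF : ∀ n, (K n : Set Cantor) ⊆ F) {R : Cantor}
    (hR : (toSet R).Finite) : ∃ z ∈ nodes F K, Hyper.imageVal F z = blockUnions K R := by
  obtain ⟨z, hz⟩ : blockUnions K R ∈ range (Hyper.imageVal F) := by
    rw [Hyper.range_imageVal]
    exact blockUnions_subset_of_finite hF hKF hR
  exact ⟨z, ⟨R, hR, hz.symm⟩, hz⟩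

lemma imageVal_mem_range_blockUnions {y : Hyper F} (hy : y ∈ closure (nodes F K)) :
    Hyper.imageVal F y ∈ range (blockUnions K) := by
  refine (isCompact_range (continuous_blockUnions K)).isClosed.closure_subset_iff.2 ?_
    (closure_mono (image_preimage_subset _ _)
      (image_closure_subset_closure_image (Hyper.isEmbedding_imageVal F).continuous ⟨y, hy, rfl⟩))
  exact image_subset_range _ _

/-- `blockUnions K` is constant near the code of an isolated node, in particular at some infinite
code. -/
lemma exists_infinite_of_isOpen_singleton (hF : IsFreeFilter F)
    (hKF : ∀ n, (K n : Set Cantor) ⊆ F) {x : closure (nodes F K)} (hxN : x.1 ∈ nodes F K)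
    (hx : IsOpen {x}) : ∃ R, (toSet R).Infinite ∧ (blockUnions K R : Set Cantor) ⊆ F := by
  obtain ⟨U, hU, hUx⟩ := isOpen_induced_iff.1 hx
  obtain ⟨V, hV, rfl⟩ := (Hyper.isEmbedding_imageVal F).isOpen_iff.1 hU
  obtain ⟨R₀, -, hR₀x⟩ := hxN
  have hxV : Hyper.imageVal F x.1 ∈ V := (hUx ▸ rfl : x ∈ Subtype.val ⁻¹' (Hyper.imageVal F ⁻¹' V))
  have hWopen : IsOpen (blockUnions K ⁻¹' V) := hV.preimage (continuous_blockUnions K)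
  have hfin : EqOn (blockUnions K) (fun _ => Hyper.imageVal F x.1)
      (blockUnions K ⁻¹' V ∩ {R | (toSet R).Finite}) := by
    rintro R ⟨hRV, hR⟩
    obtain ⟨z, hzN, hz⟩ := exists_mem_nodes hF hKF hR
    have hzx : (⟨z, subset_closure hzN⟩ : closure (nodes F K)) ∈ ({x} : Set _) := by
      rw [← hUx]
      show Hyper.imageVal F z ∈ V
      rwa [hz]
    rw [← hz]
    exact congrArg (Hyper.imageVal F ∘ Subtype.val) (mem_singleton_iff.1 hzx)
  have hW := hfin.of_subset_closure (continuous_blockUnions K).continuousOn continuousOn_const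
    inter_subset_left (Cantor.dense_setOf_finite.open_subset_closure_inter hWopen)
  obtain ⟨R, hRW, hRinf⟩ := Cantor.dense_setOf_infinite.inter_open_nonempty _ hWopen
    ⟨R₀, show blockUnions K R₀ ∈ V from hR₀x ▸ hxV⟩
  exact ⟨R, hRinf, hW hRW ▸ Hyper.coe_imageVal_subset x.1⟩

theorem exists_infinite_blockUnions_subset (hF : IsFreeFilter F)
    (hKF : ∀ n, (K n : Set Cantor) ⊆ F) (h : HereditarilyBaire (Hyper F)) :
    ∃ R, (toSet R).Infinite ∧ (blockUnions K R : Set Cantor) ⊆ F := by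
  by_contra! hbad
  have : BaireSpace (closure (nodes F K)) := h _ isClosed_closure
  have : Nonempty (closure (nodes F K)) := by
    obtain ⟨z, hz, -⟩ := exists_mem_nodes hF hKF (R := fun _ => false) (by simp [toSet])
    exact ⟨⟨z, subset_closure hz⟩⟩
  obtain ⟨⟨y, hyD⟩, hyN⟩ := exists_notMem_of_countable
    (countable_nodes.preimage Subtype.val_injective) fun x hxN hx => by
      obtain ⟨R, hR, hRF⟩ := exists_infinite_of_isOpen_singleton hF hKF hxN hx
      exact hbad R hR hRF
  obtain ⟨R, hR⟩ := imageVal_mem_range_blockUnions hyD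
  exact hbad R (fun hfin => hyN ⟨R, hfin, hR⟩) (hR ▸ Hyper.coe_imageVal_subset y)

end Nodes

/-- If the Vietoris hyperspace `K(F)` of a free filter `F` on `ℕ` (viewed as a
subspace of the Cantor set `2^ℕ`) is hereditarily Baire, then `F` is a strong
`P`-filter. -/
theorem strongPFilter_of_hyperspace_hereditarilyBaire (F : Set Cantor)
    (hF : IsFreeFilter F) (h : HereditarilyBaire (Hyper ↥F)) :
    StrongPFilter F := by
  intro C hC
  by_cases hne : ∀ n, (C n).Nonempty
  · obtain ⟨R, hR, hRF⟩ := exists_infinite_blockUnions_subset hF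
      (K := fun n => ⟨⟨C n, (hC n).1⟩, hne n⟩) (fun n => (hC n).2) h
    refine ⟨blockStart R, blockStart_zero R, strictMono_blockStart hR, fun X hX Y hY => ?_⟩
    rw [← toSet_blockSelect hR] at hY
    exact toSet_injective hY ▸ hRF (blockSelect_mem_blockUnions R hX)
  · obtain ⟨n, hn⟩ := not_forall.1 hne
    exact ⟨id, rfl, strictMono_id, fun X hX => absurd ⟨X n, hX n⟩ hn⟩
end
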